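/- arXiv:2504.12754 — 7 statements merged into one kernel-verified Lean document; each statement's English description precedes it below -/
import Mathlib

section
/- Let $\mathcal{H}$ be a finite-dimensional complex Hilbert space, $n \geq 2$ an integer, $P_1,\dots,P_n$ orthogonal projections on $\mathcal{H}$, and $\sigma$ a density operator on $\mathcal{H}$. Define $V = \frac{1}{n}\sum_{i=1}^n \mathrm{Tr}(P_i\sigma)$ and $E = \frac{1}{n(n-1)}\sum_{i\neq j} \mathrm{Tr}(P_j P_i \sigma P_i P_j)$. Then $E \geq \frac{n^2}{(n-1)^2} V (\max\{0, V - \tfrac{1}{n}\})^2$. -/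
/-!
Purify `σ = Bᴴ * B` to the unit vector `ξ = vec Bᴴ`, on which `P i` acts by left multiplication,
i.e. as the orthogonal projection `1 ⊗ₖ P i`; then `Tr (P i σ) = ‖P i ξ‖²` and
`Tr (P j P i σ P i P j) = ‖P j P i ξ‖²`. With `u i = P i ξ` and `q = ∑ ‖u i‖²`, Cauchy–Schwarz
against `ξ` gives `q² ≤ ‖∑ u i‖² = q + ∑ⱼ Re ⟪u j, ∑_{i ≠ j} P j (u i)⟫`, and Cauchy–Schwarz in each
term, then over `j`, bounds the cross term by `√(q (n - 1) ∑_{i ≠ j} ‖P j (u i)‖²)`. So for `q ≥ 1`,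
`q (q - 1)² ≤ (n - 1) ∑_{i ≠ j} ‖P j P i ξ‖²`, which is the claim after dividing by powers of `n`.
-/

open Matrix BigOperators ComplexOrder

open Finset WithLp RCLike
open scoped InnerProductSpace Kronecker MatrixOrder

lemma mul_max_zero_sub_one_sq_le {q B X : ℝ} (hq : 0 ≤ q) (hX : 0 ≤ X) (hqB : q ^ 2 - q ≤ B)
    (hB : B ^ 2 ≤ q * X) : q * max 0 (q - 1) ^ 2 ≤ X := by
  rcases le_total q 1 with hq1 | hq1
  · simpa [max_eq_left (sub_nonpos.2 hq1)] using hX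
  · rw [max_eq_right (sub_nonneg.2 hq1)]
    have hqq : 0 ≤ q ^ 2 - q := by nlinarith
    have : q * (q * (q - 1) ^ 2) ≤ q * X := by
      nlinarith [pow_le_pow_left₀ hqq hqB 2]
    exact le_of_mul_le_mul_left this (by linarith)

lemma one_div_mul_le_of_mul_max_zero_sub_one_sq_le {n q S : ℝ} (hn : 1 < n)
    (h : q * max 0 (q - 1) ^ 2 ≤ (n - 1) * S) :
    n ^ 2 / (n - 1) ^ 2 * (1 / n * q) * max 0 (1 / n * q - 1 / n) ^ 2 ≤ 1 / (n * (n - 1)) * S := by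
  have hn0 : 0 < n := by linarith
  have hn1 : n - 1 ≠ 0 := by linarith
  have hmax : max 0 (1 / n * q - 1 / n) = max 0 (q - 1) / n := by
    rw [← max_div_div_right hn0.le, zero_div]
    ring_nf
  calc n ^ 2 / (n - 1) ^ 2 * (1 / n * q) * max 0 (1 / n * q - 1 / n) ^ 2
      = q * max 0 (q - 1) ^ 2 / (n * (n - 1) ^ 2) := by
        rw [hmax]
        field_simp
    _ ≤ (n - 1) * S / (n * (n - 1) ^ 2) := by gcongr
    _ = 1 / (n * (n - 1)) * S := by field_simp

lemma sum_sum_ite_ne_eq_sum_sum_erase {ι M : Type*} [Fintype ι] [DecidableEq ι]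
    [AddCommMonoid M] (f : ι → ι → M) :
    ∑ i, ∑ j, (if i ≠ j then f i j else 0) = ∑ j, ∑ i ∈ univ.erase j, f i j := by
  rw [sum_comm]
  simp_rw [← sum_filter, filter_ne']

namespace LinearMap.IsSymmetricProjection

variable {𝕜 E : Type*} [RCLike 𝕜] [NormedAddCommGroup E] [InnerProductSpace 𝕜 E]
  {T : E →ₗ[𝕜] E}

lemma apply_apply (hT : T.IsSymmetricProjection) (x : E) : T (T x) = T x :=
  LinearMap.congr_fun hT.isIdempotentElem.eq x

lemma inner_apply_left (hT : T.IsSymmetricProjection) (x y : E) :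
    ⟪T x, T y⟫_𝕜 = ⟪T x, y⟫_𝕜 := by
  rw [← hT.isSymmetric (T x) y, hT.apply_apply]

lemma re_inner_apply_right (hT : T.IsSymmetricProjection) (x : E) :
    re ⟪x, T x⟫_𝕜 = ‖T x‖ ^ 2 := by
  rw [← hT.isSymmetric x x, ← hT.inner_apply_left, inner_self_eq_norm_sq]

end LinearMap.IsSymmetricProjection

section SymmetricProjectionFamily

variable {𝕜 E ι : Type*} [RCLike 𝕜] [NormedAddCommGroup E] [InnerProductSpace 𝕜 E]
  [Fintype ι] {P : ι → E →ₗ[𝕜] E}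

lemma sq_sum_norm_sq_le_norm_sum_sq (hP : ∀ i, (P i).IsSymmetricProjection) {ξ : E}
    (hξ : ‖ξ‖ ≤ 1) : (∑ i, ‖P i ξ‖ ^ 2) ^ 2 ≤ ‖∑ i, P i ξ‖ ^ 2 := by
  have hq : ∑ i, ‖P i ξ‖ ^ 2 = re ⟪ξ, ∑ i, P i ξ⟫_𝕜 := by
    simp only [inner_sum, map_sum, (hP _).re_inner_apply_right]
  have hle : re ⟪ξ, ∑ i, P i ξ⟫_𝕜 ≤ ‖∑ i, P i ξ‖ :=
    calc re ⟪ξ, ∑ i, P i ξ⟫_𝕜 ≤ ‖⟪ξ, ∑ i, P i ξ⟫_𝕜‖ := re_le_norm _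
      _ ≤ ‖ξ‖ * ‖∑ i, P i ξ‖ := norm_inner_le_norm _ _
      _ ≤ ‖∑ i, P i ξ‖ := mul_le_of_le_one_left (norm_nonneg _) hξ
  rw [hq]
  exact pow_le_pow_left₀ (hq ▸ by positivity) hle 2

variable [DecidableEq ι]

lemma norm_sum_sq_eq_sum_norm_sq_add_re_inner (hP : ∀ i, (P i).IsSymmetricProjection) (ξ : E) :
    ‖∑ i, P i ξ‖ ^ 2 = ∑ j, ‖P j ξ‖ ^ 2 +
      ∑ j, re ⟪P j ξ, ∑ i ∈ univ.erase j, P j (P i ξ)⟫_𝕜 := by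
  have hcol (j : ι) : ⟪P j ξ, ∑ i, P i ξ⟫_𝕜 =
      ⟪P j ξ, P j ξ⟫_𝕜 + ⟪P j ξ, ∑ i ∈ univ.erase j, P j (P i ξ)⟫_𝕜 := by
    rw [← (hP j).inner_apply_left, map_sum, ← add_sum_erase _ _ (mem_univ j), (hP j).apply_apply,
      inner_add_right]
  rw [← inner_self_eq_norm_sq (𝕜 := 𝕜), sum_inner, map_sum, ← sum_add_distrib]
  refine sum_congr rfl fun j _ => ?_
  rw [hcol, map_add, inner_self_eq_norm_sq]

lemma norm_sum_erase_apply_sq_le (ξ : E) (j : ι) :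
    ‖∑ i ∈ univ.erase j, P j (P i ξ)‖ ^ 2 ≤
      (Fintype.card ι - 1 : ℕ) * ∑ i ∈ univ.erase j, ‖P j (P i ξ)‖ ^ 2 :=
  calc ‖∑ i ∈ univ.erase j, P j (P i ξ)‖ ^ 2 ≤ (∑ i ∈ univ.erase j, ‖P j (P i ξ)‖) ^ 2 :=
        pow_le_pow_left₀ (norm_nonneg _) (norm_sum_le _ _) 2
    _ ≤ #(univ.erase j) * ∑ i ∈ univ.erase j, ‖P j (P i ξ)‖ ^ 2 := sq_sum_le_card_mul_sum_sq
    _ = (Fintype.card ι - 1 : ℕ) * ∑ i ∈ univ.erase j, ‖P j (P i ξ)‖ ^ 2 := by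
        rw [card_erase_of_mem (mem_univ j), card_univ]

theorem sum_norm_sq_mul_max_sub_one_sq_le (hP : ∀ i, (P i).IsSymmetricProjection) {ξ : E}
    (hξ : ‖ξ‖ ≤ 1) :
    (∑ i, ‖P i ξ‖ ^ 2) * max 0 (∑ i, ‖P i ξ‖ ^ 2 - 1) ^ 2 ≤
      (Fintype.card ι - 1 : ℕ) * ∑ j, ∑ i ∈ univ.erase j, ‖P j (P i ξ)‖ ^ 2 := by
  set v : ι → E := fun j => ∑ i ∈ univ.erase j, P j (P i ξ)
  refine mul_max_zero_sub_one_sq_le (by positivity) (by positivity) (B := ∑ j, ‖P j ξ‖ * ‖v j‖)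
    ?_ ?_
  · have hcross : ∑ j, re ⟪P j ξ, v j⟫_𝕜 ≤ ∑ j, ‖P j ξ‖ * ‖v j‖ :=
      sum_le_sum fun j _ => (re_le_norm _).trans (norm_inner_le_norm _ _)
    linarith [sq_sum_norm_sq_le_norm_sum_sq hP hξ, norm_sum_sq_eq_sum_norm_sq_add_re_inner hP ξ]
  · calc (∑ j, ‖P j ξ‖ * ‖v j‖) ^ 2 ≤ (∑ j, ‖P j ξ‖ ^ 2) * ∑ j, ‖v j‖ ^ 2 :=
          sum_mul_sq_le_sq_mul_sq _ _ _
      _ ≤ (∑ j, ‖P j ξ‖ ^ 2) *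
          ∑ j, (Fintype.card ι - 1 : ℕ) * ∑ i ∈ univ.erase j, ‖P j (P i ξ)‖ ^ 2 := by
          gcongr with j
          exact norm_sum_erase_apply_sq_le ξ j
      _ = _ := by rw [← mul_sum]

end SymmetricProjectionFamily

section Purification

variable {𝕜 m n : Type*} [RCLike 𝕜] [Fintype m] [Fintype n]

lemma norm_toLp_vec_mul_conjTranspose_sq (X : Matrix n n 𝕜) (B : Matrix m n 𝕜) :
    ‖toLp 2 (vec (X * Bᴴ))‖ ^ 2 = re (X * (Bᴴ * B) * Xᴴ).trace := by
  rw [← inner_self_eq_norm_sq (𝕜 := 𝕜), EuclideanSpace.inner_toLp_toLp, dotProduct_comm,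
    star_vec_dotProduct_vec, trace_mul_comm, conjTranspose_mul, conjTranspose_conjTranspose]
  simp only [Matrix.mul_assoc]

variable [DecidableEq m]

lemma IsStarProjection.one_kronecker {A : Matrix n n 𝕜} (hA : IsStarProjection A) :
    IsStarProjection ((1 : Matrix m m 𝕜) ⊗ₖ A) := by
  refine ⟨?_, ?_⟩
  · rw [IsIdempotentElem, ← mul_kronecker_mul, one_mul, hA.isIdempotentElem.eq]
  · rw [IsSelfAdjoint, star_eq_conjTranspose, conjTranspose_kronecker, conjTranspose_one,
      ← star_eq_conjTranspose, hA.isSelfAdjoint.star_eq]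

variable [DecidableEq n]

lemma IsStarProjection.isSymmetricProjection_toEuclideanLin {A : Matrix n n 𝕜}
    (hA : IsStarProjection A) : (toEuclideanLin A).IsSymmetricProjection :=
  ⟨hA.isIdempotentElem.map (toLpLinAlgEquiv 2), isSymmetric_toEuclideanLin_iff.2 hA.isSelfAdjoint⟩

lemma toEuclideanLin_one_kronecker_toLp_vec (A : Matrix n n 𝕜) (Y : Matrix n m 𝕜) :
    toEuclideanLin ((1 : Matrix m m 𝕜) ⊗ₖ A) (toLp 2 (vec Y)) = toLp 2 (vec (A * Y)) := by
  rw [vec_mul_eq_mulVec]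
  rfl

end Purification

/-- Tight consecutive measurement theorem. -/
theorem tight_CMT {d n : ℕ} (hn : 2 ≤ n)
    (P : Fin n → Matrix (Fin d) (Fin d) ℂ)
    (hP : ∀ i, (P i).IsHermitian ∧ P i * P i = P i)
    (σ : Matrix (Fin d) (Fin d) ℂ) (hσ : σ.PosSemidef) (hσtr : σ.trace = 1)
    (V E : ℝ)
    (hV : V = (1 / (n : ℝ)) * ∑ i, ((P i * σ).trace).re)
    (hE : E = (1 / ((n : ℝ) * ((n : ℝ) - 1))) * ∑ i, ∑ j,
        if i ≠ j then ((P j * P i * σ * P i * P j).trace).re else 0) :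
    E ≥ ((n : ℝ) ^ 2 / ((n : ℝ) - 1) ^ 2) * V * (max 0 (V - 1 / (n : ℝ))) ^ 2 := by
  obtain ⟨B, hB⟩ := CStarAlgebra.nonneg_iff_eq_star_mul_self.mp hσ.nonneg
  rw [star_eq_conjTranspose] at hB
  set ξ : EuclideanSpace ℂ (Fin d × Fin d) := toLp 2 (vec Bᴴ)
  set Q : Fin n → _ := fun i => toEuclideanLin ((1 : Matrix (Fin d) (Fin d) ℂ) ⊗ₖ P i)
  have hQ (i : Fin n) : (Q i).IsSymmetricProjection :=
    IsStarProjection.one_kronecker ⟨(hP i).2, (hP i).1⟩ |>.isSymmetricProjection_toEuclideanLin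
  have hξ : ‖ξ‖ ≤ 1 := by
    have h := norm_toLp_vec_mul_conjTranspose_sq 1 B
    rw [Matrix.one_mul, Matrix.one_mul, conjTranspose_one, Matrix.mul_one, ← hB, hσtr,
      RCLike.one_re] at h
    exact (pow_le_one_iff_of_nonneg (norm_nonneg _) two_ne_zero).1 h.le
  have hp (i : Fin n) : ‖Q i ξ‖ ^ 2 = ((P i * σ).trace).re := by
    rw [toEuclideanLin_one_kronecker_toLp_vec, norm_toLp_vec_mul_conjTranspose_sq, ← hB,
      (hP i).1.eq, trace_mul_comm, ← Matrix.mul_assoc, (hP i).2, RCLike.re_to_complex]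
  have hs (i j : Fin n) : ‖Q j (Q i ξ)‖ ^ 2 = ((P j * P i * σ * P i * P j).trace).re := by
    rw [toEuclideanLin_one_kronecker_toLp_vec, toEuclideanLin_one_kronecker_toLp_vec,
      ← Matrix.mul_assoc, norm_toLp_vec_mul_conjTranspose_sq, ← hB, conjTranspose_mul,
      (hP i).1.eq, (hP j).1.eq]
    simp only [Matrix.mul_assoc, RCLike.re_to_complex]
  have key := sum_norm_sq_mul_max_sub_one_sq_le hQ hξ
  simp only [hp, hs, Fintype.card_fin] at key
  rw [Nat.cast_sub (by omega), Nat.cast_one] at key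
  rw [ge_iff_le, hV, hE, sum_sum_ite_ne_eq_sum_sum_erase]
  exact one_div_mul_le_of_mul_max_zero_sub_one_sq_le (by exact_mod_cast hn) key
end

section
/- For every integer $n \geq 2$ and every real $v \in [0,1]$, there exist a finite-dimensional Hilbert space $\mathcal{H}$, a density operator $\sigma$, and orthogonal projections $P_1,\dots,P_n$ on $\mathcal{H}$ such that $\frac{1}{n}\sum_i \mathrm{Tr}(P_i\sigma) = v$ and $\frac{1}{n(n-1)}\sum_{i\neq j}\mathrm{Tr}(P_j P_i \sigma P_i P_j) = \frac{n^2}{(n-1)^2} v (\max\{0, v - \tfrac{1}{n}\})^2$. -/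
open Matrix BigOperators ComplexOrder

/-!
Take unit vectors `φᵢ` with pairwise overlaps `ε = max 0 ((n v - 1) / (n - 1))`, the projections
`Pᵢ = |φᵢ⟩⟨φᵢ|` and the pure state `σ = |w⟩⟨w|` of a unit vector with `⟨φᵢ, w⟩ = √v` for all `i`.
Rank-one algebra gives `Tr (Pᵢ σ) = v` and `Tr (Pⱼ Pᵢ σ Pᵢ Pⱼ) = ε² v` for `i ≠ j`, which is the
claimed value. Such vectors exist in `ℝ^{n+1}`: `φᵢ = √(1 - ε) eᵢ + b 𝟙` has Gram matrix
`(1 - ε) I + ε J`, whose eigenvalue on `𝟙` is `1 + (n - 1) ε ≥ n v`, so a suitable multiple of `𝟙`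
completed by an extra coordinate is a unit vector with overlap `√v` with every `φᵢ`.
-/

section RankOne

variable {ι R : Type*} [CommRing R]

theorem vecMulVec_mul_vecMulVec_eq_smul [Fintype ι] (u v w x : ι → R) :
    vecMulVec u v * vecMulVec w x = (v ⬝ᵥ w) • vecMulVec u x := by
  rw [vecMulVec_mul_vecMulVec, vecMulVec_smul]

variable [StarRing R] [Fintype ι]

theorem vecMulVec_self_star_mul_self {u : ι → R} (hu : star u ⬝ᵥ u = 1) :
    vecMulVec u (star u) * vecMulVec u (star u) = vecMulVec u (star u) := by
  rw [vecMulVec_mul_vecMulVec_eq_smul, hu, one_smul]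

theorem trace_vecMulVec_self_star_mul (a w : ι → R) :
    (vecMulVec a (star a) * vecMulVec w (star w)).trace = (star a ⬝ᵥ w) * (star w ⬝ᵥ a) := by
  rw [vecMulVec_mul_vecMulVec_eq_smul, trace_smul, trace_vecMulVec, smul_eq_mul,
    dotProduct_comm a]

theorem trace_vecMulVec_self_star_sandwich (c a w : ι → R) :
    (vecMulVec c (star c) * vecMulVec a (star a) * vecMulVec w (star w) *
        vecMulVec a (star a) * vecMulVec c (star c)).trace =
      (star c ⬝ᵥ a) * (star a ⬝ᵥ w) * (star w ⬝ᵥ a) * (star a ⬝ᵥ c) * (star c ⬝ᵥ c) := by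
  simp only [vecMulVec_mul_vecMulVec_eq_smul, smul_mul_assoc, smul_smul, trace_smul,
    trace_vecMulVec, smul_eq_mul, dotProduct_comm c (star c)]

end RankOne

theorem sum_sum_ite_ne_const {R : Type*} [CommRing R] (n : ℕ) (c : R) :
    ∑ i : Fin n, ∑ j : Fin n, (if i ≠ j then c else 0) = n * (n - 1) * c := by
  rcases n with _ | n
  · simp
  · simp [Finset.sum_ite, Finset.filter_ne, mul_assoc]

section Measurement

variable {ι : Type*} [Fintype ι]

theorem star_dotProduct_eq_ofReal_symm {a w : ι → ℂ} {s : ℝ} (h : star a ⬝ᵥ w = s) :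
    star w ⬝ᵥ a = s := by
  rw [star_dotProduct, h, Complex.star_def, Complex.conj_ofReal]

variable {n : ℕ} {φ : Fin n → ι → ℂ} {w : ι → ℂ} {ε s : ℝ}

theorem sum_re_trace_vecMulVec_mul_of_overlap (hφw : ∀ i, star (φ i) ⬝ᵥ w = s) :
    ∑ i, ((vecMulVec (φ i) (star (φ i)) * vecMulVec w (star w)).trace).re = n * s ^ 2 := by
  have hwφ i := star_dotProduct_eq_ofReal_symm (hφw i)
  simp only [trace_vecMulVec_self_star_mul, hφw, hwφ, ← Complex.ofReal_mul, Complex.ofReal_re,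
    Finset.sum_const, Finset.card_univ, Fintype.card_fin, nsmul_eq_mul]
  ring

theorem sum_re_trace_sandwich_of_equiangular
    (hφ : ∀ i j, star (φ i) ⬝ᵥ φ j = if i = j then 1 else (ε : ℂ))
    (hφw : ∀ i, star (φ i) ⬝ᵥ w = s) :
    ∑ i, ∑ j, (if i ≠ j then ((vecMulVec (φ j) (star (φ j)) * vecMulVec (φ i) (star (φ i)) *
        vecMulVec w (star w) * vecMulVec (φ i) (star (φ i)) *
          vecMulVec (φ j) (star (φ j))).trace).re else 0) = n * (n - 1) * (ε ^ 2 * s ^ 2) := by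
  have hwφ i := star_dotProduct_eq_ofReal_symm (hφw i)
  rw [← sum_sum_ite_ne_const]
  refine Finset.sum_congr rfl fun i _ => Finset.sum_congr rfl fun j _ => ?_
  split_ifs with hij
  · rw [trace_vecMulVec_self_star_sandwich, hφ, hφ, hφ, if_neg (Ne.symm hij), if_neg hij,
      if_pos rfl, hφw, hwφ]
    norm_cast
    ring
  · rfl

end Measurement

theorem single_add_const_dotProduct {ι : Type*} [Fintype ι] [DecidableEq ι] (a b : ℝ) (i j : ι) :
    (a • Pi.single i 1 + b • 1 : ι → ℝ) ⬝ᵥ (a • Pi.single j 1 + b • 1) =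
      (if i = j then a ^ 2 else 0) + (2 * a * b + Fintype.card ι * b ^ 2) := by
  simp only [add_dotProduct, dotProduct_add, smul_dotProduct, dotProduct_smul, single_dotProduct,
    dotProduct_single, one_dotProduct_one, Pi.add_apply, Pi.smul_apply, Pi.single_apply,
    Pi.one_apply, smul_eq_mul, eq_comm (a := j)]
  split_ifs <;> ring

theorem single_add_const_dotProduct_one {ι : Type*} [Fintype ι] [DecidableEq ι] (a b : ℝ) (i : ι) :
    (a • Pi.single i 1 + b • 1 : ι → ℝ) ⬝ᵥ 1 = a + Fintype.card ι * b := by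
  simp [add_dotProduct, mul_comm]

theorem exists_equiangular_vectors {n : ℕ} (hn : n ≠ 0) {ε : ℝ} (hε₀ : 0 ≤ ε) (hε₁ : ε ≤ 1) :
    ∃ φ : Fin n → Fin n → ℝ, (∀ i j, φ i ⬝ᵥ φ j = if i = j then 1 else ε) ∧
      ∀ i, φ i ⬝ᵥ 1 = √(1 + (n - 1) * ε) := by
  have hn' : (n : ℝ) ≠ 0 := by exact_mod_cast hn
  set a := √(1 - ε)
  set b := (√(1 + (n - 1) * ε) - a) / n
  have ha : a ^ 2 = 1 - ε := Real.sq_sqrt (by linarith)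
  have hab : a + n * b = √(1 + (n - 1) * ε) := by
    simp only [b]
    field_simp
    ring
  have hb : 2 * a * b + n * b ^ 2 = ε := by
    have hD : (a + n * b) ^ 2 = 1 + (n - 1) * ε := by
      rw [hab, Real.sq_sqrt (by nlinarith)]
    refine mul_left_cancel₀ hn' ?_
    linear_combination hD - ha
  refine ⟨fun i => a • Pi.single i 1 + b • 1, fun i j => ?_, fun i => ?_⟩
  · rw [single_add_const_dotProduct, Fintype.card_fin, hb]
    split_ifs <;> linarith
  · rw [single_add_const_dotProduct_one, Fintype.card_fin, hab]

theorem star_ofReal_dotProduct_ofReal {ι : Type*} [Fintype ι] (x y : ι → ℝ) :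
    star (fun k => (x k : ℂ)) ⬝ᵥ (fun k => (y k : ℂ)) = ((x ⬝ᵥ y : ℝ) : ℂ) := by
  simp [dotProduct]

theorem exists_equiangular_unit_vectors_with_overlap {n : ℕ} (hn : n ≠ 0) {ε v : ℝ}
    (hε₀ : 0 ≤ ε) (hε₁ : ε ≤ 1) (hv : 0 ≤ v) (hnv : n * v ≤ 1 + (n - 1) * ε) :
    ∃ (φ : Fin n → Fin (n + 1) → ℂ) (w : Fin (n + 1) → ℂ),
      (∀ i j, star (φ i) ⬝ᵥ φ j = if i = j then 1 else (ε : ℂ)) ∧ star w ⬝ᵥ w = 1 ∧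
        ∀ i, star (φ i) ⬝ᵥ w = (√v : ℂ) := by
  obtain ⟨φ, hφ, hφ1⟩ := exists_equiangular_vectors hn hε₀ hε₁
  have hn₁ : (1 : ℝ) ≤ n := by exact_mod_cast Nat.one_le_iff_ne_zero.mpr hn
  set D := 1 + (n - 1) * ε
  have hD : 0 < D := by nlinarith
  have hc : n * (v / D) ≤ 1 := by rwa [mul_div_assoc', div_le_one hD]
  set W : Fin (n + 1) → ℝ := vecCons √(1 - n * (v / D)) (√(v / D) • 1)
  refine ⟨fun i k => ((vecCons 0 (φ i) : Fin (n + 1) → ℝ) k : ℂ), fun k => (W k : ℂ),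
    fun i j => ?_, ?_, fun i => ?_⟩
  · rw [star_ofReal_dotProduct_ofReal, cons_dotProduct_cons, zero_mul, zero_add, hφ]
    split_ifs <;> simp
  · have ht := Real.mul_self_sqrt (sub_nonneg.2 hc)
    have hc := Real.mul_self_sqrt (div_nonneg hv hD.le)
    rw [star_ofReal_dotProduct_ofReal, cons_dotProduct_cons, ← Complex.ofReal_one]
    congr 1
    simp only [dotProduct_smul, smul_dotProduct, one_dotProduct_one, Fintype.card_fin, smul_eq_mul]
    linear_combination ht + n * hc
  · rw [star_ofReal_dotProduct_ofReal, cons_dotProduct_cons, zero_mul, zero_add, dotProduct_smul,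
      hφ1, smul_eq_mul, ← Real.sqrt_mul (div_nonneg hv hD.le), div_mul_cancel₀ v hD.ne']

/-- Equals the paper's overlap `(n v - 1) / (n - 1)` when `v > 1 / n`, and `0` otherwise. -/
noncomputable def tightOverlap (n : ℕ) (v : ℝ) : ℝ := n / (n - 1) * max 0 (v - 1 / n)

section TightOverlap

variable {n : ℕ} (hn : (1 : ℝ) < n)
include hn

theorem tightOverlap_nonneg (v : ℝ) : 0 ≤ tightOverlap n v :=
  mul_nonneg (div_nonneg (by linarith) (by linarith)) (le_max_left _ _)

theorem tightOverlap_le_one {v : ℝ} (hv : v ≤ 1) : tightOverlap n v ≤ 1 := by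
  rw [tightOverlap, div_mul_eq_mul_div, div_le_one (by linarith)]
  have h1n : 1 / (n : ℝ) ≤ 1 := by rw [div_le_one] <;> linarith
  calc n * max 0 (v - 1 / n) ≤ n * (1 - 1 / n) := by
        gcongr
        exact max_le (by linarith) (by linarith)
    _ = n - 1 := by field_simp

theorem mul_le_one_add_tightOverlap (v : ℝ) : n * v ≤ 1 + (n - 1) * tightOverlap n v := by
  rw [tightOverlap, ← mul_assoc, mul_div_cancel₀ _ (by linarith : (n : ℝ) - 1 ≠ 0)]
  have h := mul_le_mul_of_nonneg_left (le_max_right 0 (v - 1 / n)) (by linarith : (0 : ℝ) ≤ n)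
  rw [mul_sub, mul_one_div_cancel (by linarith)] at h
  linarith

end TightOverlap

/-- Tightness of the tight consecutive measurement theorem. -/
theorem tight_CMT_tightness (n : ℕ) (hn : 2 ≤ n) (v : ℝ) (hv : v ∈ Set.Icc (0 : ℝ) 1) :
    ∃ (d : ℕ) (σ : Matrix (Fin d) (Fin d) ℂ) (P : Fin n → Matrix (Fin d) (Fin d) ℂ),
      σ.PosSemidef ∧ σ.trace = 1 ∧
      (∀ i, (P i).IsHermitian ∧ P i * P i = P i) ∧
      (1 / (n : ℝ)) * ∑ i, ((P i * σ).trace).re = v ∧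
      (1 / ((n : ℝ) * ((n : ℝ) - 1))) * ∑ i, ∑ j,
          (if i ≠ j then ((P j * P i * σ * P i * P j).trace).re else 0)
        = ((n : ℝ) ^ 2 / ((n : ℝ) - 1) ^ 2) * v * (max 0 (v - 1 / (n : ℝ))) ^ 2 := by
  have hn₁ : (1 : ℝ) < n := by exact_mod_cast hn
  obtain ⟨φ, w, hφ, hw, hφw⟩ := exists_equiangular_unit_vectors_with_overlap (by omega)
    (tightOverlap_nonneg hn₁ v) (tightOverlap_le_one hn₁ hv.2) hv.1
    (mul_le_one_add_tightOverlap hn₁ v)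
  refine ⟨n + 1, vecMulVec w (star w), fun i => vecMulVec (φ i) (star (φ i)),
    posSemidef_vecMulVec_self_star w, ?_,
    fun i => ⟨(posSemidef_vecMulVec_self_star _).isHermitian,
      vecMulVec_self_star_mul_self (by simpa using hφ i i)⟩, ?_, ?_⟩
  · rwa [trace_vecMulVec, dotProduct_comm]
  · rw [sum_re_trace_vecMulVec_mul_of_overlap hφw, Real.sq_sqrt hv.1]
    field_simp
  · rw [sum_re_trace_sandwich_of_equiangular hφ hφw, Real.sq_sqrt hv.1, tightOverlap]
    field_simp
end

section
/- Let $|\phi\rangle, |\phi_1\rangle, \dots, |\phi_n\rangle$ be unit vectors in a finite-dimensional Hilbert space, and let $V = \frac{1}{n}\sum_{i=1}^n |\langle\phi|\phi_i\rangle|^2$. Then $\frac{1}{n(n-1)}\sum_{i \neq j} |\langle\phi|\phi_i\rangle|^2 |\langle\phi_i|\phi_j\rangle|^2 \geq \frac{n^2}{(n-1)^2} V (\max\{0, V - \tfrac{1}{n}\})^2$. -/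
/-!
Write `sᵢ = |⟨φ|φᵢ⟩|`, `tᵢⱼ = |⟨φᵢ|φⱼ⟩|` and `A = ∑ sᵢ² = nV`. For `M = ∑ |φᵢ⟩⟨φᵢ|`, Cauchy–Schwarz
gives `A² = ⟨φ|M|φ⟩² ≤ ‖Mφ‖² ≤ ∑ᵢⱼ sᵢ tᵢⱼ sⱼ`. Since `tᵢᵢ = 1`, the off-diagonal part `C` of this
sum is at least `A(A - 1)`, while Cauchy–Schwarz over the ordered pairs `i ≠ j` gives
`C² ≤ (n - 1) A ∑_{i≠j} sᵢ² tᵢⱼ²`. Hence `A (A - 1)² ≤ (n - 1) ∑_{i≠j} sᵢ² tᵢⱼ²` once `A ≥ 1`,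
which is the claim after substituting `A = nV`.
-/

open Finset
open scoped InnerProductSpace

section Gram

variable {𝕜 E ι : Type*} [RCLike 𝕜] [NormedAddCommGroup E] [InnerProductSpace 𝕜 E] [Fintype ι]

theorem norm_sum_smul_sq_le (c : ι → 𝕜) (y : ι → E) :
    ‖∑ i, c i • y i‖ ^ 2 ≤ ∑ i, ∑ j, ‖c i‖ * ‖⟪y i, y j⟫_𝕜‖ * ‖c j‖ := by
  have hexpand : ⟪∑ i, c i • y i, ∑ j, c j • y j⟫_𝕜 =
      ∑ i, ∑ j, star (c i) * ⟪y i, y j⟫_𝕜 * c j := by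
    rw [sum_inner]
    refine sum_congr rfl fun i _ => ?_
    rw [inner_sum]
    refine sum_congr rfl fun j _ => ?_
    rw [inner_smul_left, inner_smul_right, RCLike.star_def]
    ring
  calc ‖∑ i, c i • y i‖ ^ 2 = RCLike.re ⟪∑ i, c i • y i, ∑ j, c j • y j⟫_𝕜 :=
        (inner_self_eq_norm_sq _).symm
    _ ≤ ‖⟪∑ i, c i • y i, ∑ j, c j • y j⟫_𝕜‖ := RCLike.re_le_norm _
    _ ≤ _ := by
      rw [hexpand]
      refine (norm_sum_le _ _).trans (sum_le_sum fun i _ => ?_)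
      refine (norm_sum_le _ _).trans (sum_le_sum fun j _ => ?_)
      rw [norm_mul, norm_mul, norm_star]

theorem sq_sum_norm_inner_sq_le (x : E) (y : ι → E) :
    (∑ i, ‖⟪x, y i⟫_𝕜‖ ^ 2) ^ 2 ≤
      ‖x‖ ^ 2 * ∑ i, ∑ j, ‖⟪x, y i⟫_𝕜‖ * ‖⟪y i, y j⟫_𝕜‖ * ‖⟪x, y j⟫_𝕜‖ := by
  -- `w = M x` for the operator `M = ∑ i, |y i⟩⟨y i|`
  set w := ∑ i, ⟪y i, x⟫_𝕜 • y i
  have hxw : RCLike.re ⟪x, w⟫_𝕜 = ∑ i, ‖⟪x, y i⟫_𝕜‖ ^ 2 := by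
    rw [inner_sum, map_sum]
    refine sum_congr rfl fun i _ => ?_
    rw [inner_smul_right, ← inner_conj_symm, RCLike.conj_mul, ← RCLike.ofReal_pow,
      RCLike.ofReal_re]
  have hA : ∑ i, ‖⟪x, y i⟫_𝕜‖ ^ 2 ≤ ‖x‖ * ‖w‖ := hxw ▸ re_inner_le_norm x w
  have hw : ‖w‖ ^ 2 ≤ ∑ i, ∑ j, ‖⟪x, y i⟫_𝕜‖ * ‖⟪y i, y j⟫_𝕜‖ * ‖⟪x, y j⟫_𝕜‖ := by
    simpa only [norm_inner_symm (y _) x] using norm_sum_smul_sq_le (fun i => ⟪y i, x⟫_𝕜) y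
  calc (∑ i, ‖⟪x, y i⟫_𝕜‖ ^ 2) ^ 2 ≤ (‖x‖ * ‖w‖) ^ 2 :=
        pow_le_pow_left₀ (sum_nonneg fun i _ => sq_nonneg _) hA 2
    _ = ‖x‖ ^ 2 * ‖w‖ ^ 2 := mul_pow _ _ _
    _ ≤ _ := mul_le_mul_of_nonneg_left hw (sq_nonneg _)

end Gram

section OffDiagonal

variable {ι : Type*} [Fintype ι] [DecidableEq ι]

theorem sum_sum_ite_ne_eq_sum_offDiag {M : Type*} [AddCommMonoid M] (f : ι → ι → M) :
    ∑ i, ∑ j, (if i ≠ j then f i j else 0) = ∑ p ∈ univ.offDiag, f p.1 p.2 := by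
  rw [← sum_product' (f := fun i j => if i ≠ j then f i j else 0), ← sum_filter]
  congr 1
  ext p
  simp

theorem sum_sum_eq_sum_sum_ite_ne_add_sum_diag {M : Type*} [AddCommMonoid M] (f : ι → ι → M) :
    ∑ i, ∑ j, f i j = ∑ i, ∑ j, (if i ≠ j then f i j else 0) + ∑ i, f i i := by
  rw [← sum_add_distrib]
  refine sum_congr rfl fun i _ => ?_
  rw [← sum_filter, filter_ne, sum_erase_add _ _ (mem_univ i)]

theorem sum_sum_ite_ne_right {R : Type*} [Ring R] (g : ι → R) :
    ∑ i, ∑ j, (if i ≠ j then g j else 0) = (Fintype.card ι - 1) * ∑ j, g j := by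
  have := sum_sum_eq_sum_sum_ite_ne_add_sum_diag fun (_ j : ι) => g j
  simp only [sum_const, card_univ, nsmul_eq_mul] at this
  rw [sub_one_mul, eq_sub_iff_add_eq, ← this]

theorem sq_sum_sum_ite_ne_mul_le {R : Type*} [CommRing R] [LinearOrder R] [IsStrictOrderedRing R]
    (a b : ι → ι → R) :
    (∑ i, ∑ j, if i ≠ j then a i j * b i j else 0) ^ 2 ≤
      (∑ i, ∑ j, if i ≠ j then a i j ^ 2 else 0) * ∑ i, ∑ j, if i ≠ j then b i j ^ 2 else 0 := by
  simp only [sum_sum_ite_ne_eq_sum_offDiag]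
  exact sum_mul_sq_le_sq_mul_sq _ _ _

theorem mul_sub_one_sq_le_card_sub_one_mul (s : ι → ℝ) (t : ι → ι → ℝ) (ht : ∀ i, t i i ≤ 1)
    (hgram : (∑ i, s i ^ 2) ^ 2 ≤ ∑ i, ∑ j, s i * t i j * s j) (hA : 1 ≤ ∑ i, s i ^ 2) :
    (∑ i, s i ^ 2) * (∑ i, s i ^ 2 - 1) ^ 2 ≤
      (Fintype.card ι - 1) * ∑ i, ∑ j, if i ≠ j then s i ^ 2 * t i j ^ 2 else 0 := by
  set A := ∑ i, s i ^ 2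
  set S := ∑ i, ∑ j, if i ≠ j then s i ^ 2 * t i j ^ 2 else 0
  set C := ∑ i, ∑ j, if i ≠ j then s i * t i j * s j else 0
  have hdiag : ∑ i, s i * t i i * s i ≤ A :=
    sum_le_sum fun i _ => by nlinarith [ht i, sq_nonneg (s i)]
  have hC : A * (A - 1) ≤ C := by
    rw [sum_sum_eq_sum_sum_ite_ne_add_sum_diag] at hgram
    linarith
  have hCS : C ^ 2 ≤ S * ((Fintype.card ι - 1) * A) := by
    simpa only [mul_pow, sum_sum_ite_ne_right] using
      sq_sum_sum_ite_ne_mul_le (fun i j => s i * t i j) (fun _ j => s j)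
  have hApos : 0 < A := by linarith
  refine le_of_mul_le_mul_left ?_ hApos
  calc A * (A * (A - 1) ^ 2) = (A * (A - 1)) ^ 2 := by ring
    _ ≤ C ^ 2 := pow_le_pow_left₀ (mul_nonneg hApos.le (by linarith)) hC 2
    _ ≤ S * ((Fintype.card ι - 1) * A) := hCS
    _ = A * ((Fintype.card ι - 1) * S) := by ring

end OffDiagonal

theorem mul_sub_one_sq_le_of_norm_le_one {𝕜 E ι : Type*} [RCLike 𝕜] [NormedAddCommGroup E]
    [InnerProductSpace 𝕜 E] [Fintype ι] [DecidableEq ι] {x : E} {y : ι → E} (hx : ‖x‖ ≤ 1)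
    (hy : ∀ i, ‖y i‖ ≤ 1) (hA : 1 ≤ ∑ i, ‖⟪x, y i⟫_𝕜‖ ^ 2) :
    (∑ i, ‖⟪x, y i⟫_𝕜‖ ^ 2) * (∑ i, ‖⟪x, y i⟫_𝕜‖ ^ 2 - 1) ^ 2 ≤
      (Fintype.card ι - 1) *
        ∑ i, ∑ j, if i ≠ j then ‖⟪x, y i⟫_𝕜‖ ^ 2 * ‖⟪y i, y j⟫_𝕜‖ ^ 2 else 0 := by
  refine mul_sub_one_sq_le_card_sub_one_mul _ _ (fun i => ?_) ?_ hA
  · calc ‖⟪y i, y i⟫_𝕜‖ ≤ ‖y i‖ * ‖y i‖ := norm_inner_le_norm _ _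
      _ ≤ 1 := mul_le_one₀ (hy i) (norm_nonneg _) (hy i)
  · refine (sq_sum_norm_inner_sq_le x y).trans (mul_le_of_le_one_left ?_ ?_)
    · exact sum_nonneg fun i _ => sum_nonneg fun j _ => by positivity
    · exact pow_le_one₀ (norm_nonneg x) hx

theorem rescaled_bound_of_mul_sub_one_sq_le {n A S : ℝ} (hn : 1 < n) (hS : 0 ≤ S)
    (h : 1 ≤ A → A * (A - 1) ^ 2 ≤ (n - 1) * S) :
    n ^ 2 / (n - 1) ^ 2 * (1 / n * A) * max 0 (1 / n * A - 1 / n) ^ 2 ≤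
      1 / (n * (n - 1)) * S := by
  have hn1 : 0 < n - 1 := sub_pos.2 hn
  rw [show 1 / n * A - 1 / n = (A - 1) / n by ring]
  rcases le_or_gt A 1 with hA | hA
  · rw [max_eq_left (div_nonpos_of_nonpos_of_nonneg (by linarith) (by linarith)),
      zero_pow two_ne_zero, mul_zero]
    positivity
  · rw [max_eq_right (div_nonneg (by linarith) (by linarith)), ← sub_nonneg]
    have hdiff : 1 / (n * (n - 1)) * S - n ^ 2 / (n - 1) ^ 2 * (1 / n * A) * ((A - 1) / n) ^ 2
        = ((n - 1) * S - A * (A - 1) ^ 2) / (n * (n - 1) ^ 2) := by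
      field_simp
    rw [hdiff]
    exact div_nonneg (by linarith [h hA.le]) (by positivity)

theorem star_dotProduct_eq_inner_toLp {𝕜 ι : Type*} [RCLike 𝕜] [Fintype ι] (x y : ι → 𝕜) :
    star x ⬝ᵥ y = ⟪WithLp.toLp 2 x, WithLp.toLp 2 y⟫_𝕜 := by
  rw [EuclideanSpace.inner_toLp_toLp, dotProduct_comm]

theorem norm_toLp_eq_one_of_star_dotProduct_self {𝕜 ι : Type*} [RCLike 𝕜] [Fintype ι]
    {x : ι → 𝕜} (h : star x ⬝ᵥ x = 1) : ‖WithLp.toLp 2 x‖ = 1 := by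
  rw [star_dotProduct_eq_inner_toLp, inner_self_eq_norm_sq_to_K] at h
  exact (pow_eq_one_iff_of_nonneg (norm_nonneg _) two_ne_zero).1 (by exact_mod_cast h)

/-- Pure-state core of the tight consecutive measurement theorem. -/
theorem pure_state_CMT {d n : ℕ} (hn : 2 ≤ n)
    (φ : Fin d → ℂ) (φs : Fin n → Fin d → ℂ)
    (hφ : star φ ⬝ᵥ φ = 1) (hφs : ∀ i, star (φs i) ⬝ᵥ φs i = 1)
    (V : ℝ) (hV : V = (1 / (n : ℝ)) * ∑ i, ‖star φ ⬝ᵥ φs i‖ ^ 2) :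
    (1 / ((n : ℝ) * ((n : ℝ) - 1))) * ∑ i, ∑ j,
        (if i ≠ j then ‖star φ ⬝ᵥ φs i‖ ^ 2 * ‖star (φs i) ⬝ᵥ φs j‖ ^ 2 else 0)
      ≥ ((n : ℝ) ^ 2 / ((n : ℝ) - 1) ^ 2) * V * (max 0 (V - 1 / (n : ℝ))) ^ 2 := by
  have hbound := mul_sub_one_sq_le_of_norm_le_one (𝕜 := ℂ)
    (norm_toLp_eq_one_of_star_dotProduct_self hφ).le
    (fun i => (norm_toLp_eq_one_of_star_dotProduct_self (hφs i)).le)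
  simp only [← star_dotProduct_eq_inner_toLp, Fintype.card_fin] at hbound
  rw [hV, ge_iff_le]
  exact rescaled_bound_of_mul_sub_one_sq_le (by exact_mod_cast hn)
    (sum_nonneg fun i _ => sum_nonneg fun j _ => by positivity) hbound
end

section
/- Let $p \geq 2$, $q \geq p$ and $\omega \in [0,1]$ satisfy $\omega(\omega - \tfrac{1}{p})^2 \leq \frac{(p-1)^2}{q p^2}$ and $\omega \geq \tfrac{1}{p}$. Then $\omega \leq \frac{1}{3p}(2 + \Sigma^{-1} + \Sigma)$ where $\Sigma = \left(\frac{\Delta + \sqrt{\Delta^2 - 4}}{2}\right)^{1/3}$ and $\Delta = \frac{27p(p-1)^2}{q} - 2$. -/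
/-!
Put `a = 1/p` and `c = (p-1)²/(qp²)`, so that `Δ = 27c/a³ - 2`. The substitution
`x = a(2 + t)/3` turns `x(x - a)² = c` into `t³ - 3t = Δ`, which is solved by Cardano's
`t = Σ + Σ⁻¹` because `Σ³ + Σ⁻³ = Δ`. Since `x ↦ x(x - a)²` is strictly increasing on `[a, ∞)`,
every `ω ≥ a` with `ω(ω - a)² ≤ c` lies below this root.
-/

open Real

lemma two_le_inv_add_self {S : ℝ} (hS : 0 < S) : 2 ≤ S⁻¹ + S := by
  have key : S⁻¹ + S - 2 = (S - 1) ^ 2 / S := by field_simp; ring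
  linarith [div_nonneg (sq_nonneg (S - 1)) hS.le]

lemma inv_add_self_pow_three_sub {S : ℝ} (hS : S ≠ 0) :
    (S⁻¹ + S) ^ 3 - 3 * (S⁻¹ + S) = (S ^ 3)⁻¹ + S ^ 3 := by
  field_simp
  ring

section HalfAddSqrt

variable {Δ : ℝ}

lemma one_le_half_add_sqrt (hΔ : 2 ≤ Δ) : 1 ≤ (Δ + √(Δ ^ 2 - 4)) / 2 := by
  linarith [sqrt_nonneg (Δ ^ 2 - 4)]

/-- `(Δ + √(Δ² - 4))/2` is a root of `y² - Δy + 1`. -/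
lemma inv_add_half_add_sqrt (hΔ : 2 ≤ Δ) :
    ((Δ + √(Δ ^ 2 - 4)) / 2)⁻¹ + (Δ + √(Δ ^ 2 - 4)) / 2 = Δ := by
  have hy := one_le_half_add_sqrt hΔ
  have hsq : √(Δ ^ 2 - 4) ^ 2 = Δ ^ 2 - 4 := sq_sqrt (by nlinarith)
  field_simp
  linear_combination hsq

lemma cubic_of_rpow_third_half_add_sqrt {S : ℝ} (hΔ : 2 ≤ Δ)
    (hS : S = ((Δ + √(Δ ^ 2 - 4)) / 2) ^ ((1 : ℝ) / 3)) :
    0 < S ∧ (S⁻¹ + S) ^ 3 - 3 * (S⁻¹ + S) = Δ := by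
  have hy : 0 < (Δ + √(Δ ^ 2 - 4)) / 2 := by linarith [one_le_half_add_sqrt hΔ]
  have hS3 : S ^ 3 = (Δ + √(Δ ^ 2 - 4)) / 2 := by
    rw [hS, one_div]
    exact_mod_cast rpow_inv_natCast_pow hy.le three_ne_zero
  have hS0 : 0 < S := hS ▸ rpow_pos_of_pos hy _
  refine ⟨hS0, ?_⟩
  rw [inv_add_self_pow_three_sub hS0.ne', hS3, inv_add_half_add_sqrt hΔ]

end HalfAddSqrt

lemma strictMonoOn_mul_sub_sq {a : ℝ} (ha : 0 ≤ a) :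
    StrictMonoOn (fun x : ℝ => x * (x - a) ^ 2) (Set.Ici a) := by
  intro x (hx : a ≤ x) y (hy : a ≤ y) hxy
  calc x * (x - a) ^ 2 ≤ y * (x - a) ^ 2 := by gcongr
    _ < y * (y - a) ^ 2 := by
      have : x - a < y - a := by linarith
      gcongr
      linarith

/-- Cardano's formula for the root `x ≥ a` of `x(x - a)² = a³(Δ + 2)/27`. -/
lemma cardano_mul_sub_sq {a Δ S : ℝ} (ha : 0 ≤ a) (hΔ : 2 ≤ Δ)
    (hS : S = ((Δ + √(Δ ^ 2 - 4)) / 2) ^ ((1 : ℝ) / 3)) :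
    a ≤ a * (2 + S⁻¹ + S) / 3 ∧
      a * (2 + S⁻¹ + S) / 3 * (a * (2 + S⁻¹ + S) / 3 - a) ^ 2 = a ^ 3 * (Δ + 2) / 27 := by
  obtain ⟨hS0, hcubic⟩ := cubic_of_rpow_third_half_add_sqrt hΔ hS
  have ht := two_le_inv_add_self hS0
  constructor
  · nlinarith
  · rw [← hcubic]
    ring

theorem cubic_inequality_solution_general (p q : ℕ) (hp : 2 ≤ p)
    (ω : ℝ)
    (hωp : 1 / (p : ℝ) ≤ ω)
    (hcubic : ω * (ω - 1 / (p : ℝ)) ^ 2 ≤ ((p : ℝ) - 1) ^ 2 / ((q : ℝ) * (p : ℝ) ^ 2))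
    (Δ Sig : ℝ)
    (hΔ : Δ = 27 * (p : ℝ) * ((p : ℝ) - 1) ^ 2 / (q : ℝ) - 2)
    (hΔ2 : 2 ≤ Δ)
    (hSig : Sig = ((Δ + Real.sqrt (Δ ^ 2 - 4)) / 2) ^ ((1 : ℝ) / 3)) :
    ω ≤ (1 / (3 * (p : ℝ))) * (2 + Sig⁻¹ + Sig) := by
  have hp0 : (p : ℝ) ≠ 0 := Nat.cast_ne_zero.mpr (by omega)
  have ha : (0 : ℝ) ≤ 1 / p := by positivity
  obtain ⟨hroot_ge, hroot⟩ := cardano_mul_sub_sq ha hΔ2 hSig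
  have hc : (1 / (p : ℝ)) ^ 3 * (Δ + 2) / 27 = ((p : ℝ) - 1) ^ 2 / ((q : ℝ) * (p : ℝ) ^ 2) := by
    rw [hΔ]
    field_simp
    ring
  rw [hc] at hroot
  have hle := (strictMonoOn_mul_sub_sq ha).le_iff_le hωp hroot_ge
  calc ω ≤ 1 / p * (2 + Sig⁻¹ + Sig) / 3 := hle.mp (hroot ▸ hcubic)
    _ = 1 / (3 * p) * (2 + Sig⁻¹ + Sig) := by ring

/-- Solving the cubic inequality arising from the coupled-game bound for `CHSH_q(p)`. -/
theorem cubic_inequality_solution (p q : ℕ) (hp : 2 ≤ p) (hq : p ≤ q)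
    (ω : ℝ) (hω : ω ∈ Set.Icc (0 : ℝ) 1)
    (hωp : 1 / (p : ℝ) ≤ ω)
    (hcubic : ω * (ω - 1 / (p : ℝ)) ^ 2 ≤ ((p : ℝ) - 1) ^ 2 / ((q : ℝ) * (p : ℝ) ^ 2))
    (Δ Sig : ℝ)
    (hΔ : Δ = 27 * (p : ℝ) * ((p : ℝ) - 1) ^ 2 / (q : ℝ) - 2)
    (hΔ2 : 2 ≤ Δ)
    (hSig : Sig = ((Δ + Real.sqrt (Δ ^ 2 - 4)) / 2) ^ ((1 : ℝ) / 3)) :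
    ω ≤ (1 / (3 * (p : ℝ))) * (2 + Sig⁻¹ + Sig) :=
  cubic_inequality_solution_general p q hp ω hωp hcubic Δ Sig hΔ hΔ2 hSig
end

section
/- Let $P_0, P_1$ be orthogonal projections and $\sigma_0, \sigma_1$ density operators on a finite-dimensional Hilbert space. Define $V = \frac{1}{2}(\mathrm{Tr}(P_0\sigma_0) + \mathrm{Tr}(P_1\sigma_1))$, $E = \frac{1}{2}(\mathrm{Tr}(P_1 P_0 \sigma_0 P_0 P_1) + \mathrm{Tr}(P_0 P_1 \sigma_1 P_1 P_0))$, and $F = \|\sqrt{\sigma_0}\sqrt{\sigma_1}\|_1$. Then $E \geq V\left(\max\{0, (2V-1)F - 2\sqrt{V(1-V)}\sqrt{1-F^2}\}\right)^2$. -/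
open Matrix BigOperators ComplexOrder

/-- The square root of a positive semidefinite matrix, as defined in the older Mathlib. -/
noncomputable def Matrix.PosSemidef.sqrt {n : Type*} [Fintype n] [DecidableEq n] {𝕜 : Type*}
    [RCLike 𝕜] {A : Matrix n n 𝕜} (hA : A.PosSemidef) : Matrix n n 𝕜 :=
  hA.1.eigenvectorUnitary.1 * diagonal ((↑) ∘ (√·) ∘ hA.1.eigenvalues) *
  (star hA.1.eigenvectorUnitary : Matrix n n 𝕜)

/-- The trace norm of a complex matrix: `‖A‖₁ = Tr √(Aᴴ A)`. -/
noncomputable def traceNorm {d : ℕ} (A : Matrix (Fin d) (Fin d) ℂ) : ℝ :=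
  ((Matrix.posSemidef_conjTranspose_mul_self A).sqrt).trace.re

/-!
Both states are realised as unit vectors of the Hilbert–Schmidt space of matrices:
`x₀ = √σ₀` and `x₁ = √σ₁ W`, where `W` inverts the unitary factor of the polar decomposition of
`√σ₀ √σ₁`, so that `⟪x₀, x₁⟫ = F` (Uhlmann). Left multiplication by `P₀`, `P₁` is an orthogonal
projection `Q₀`, `Q₁` there, and `V`, `E` are the averages of `‖Qᵢ xᵢ‖²` and of `‖Q₁ Q₀ x₀‖²`,
`‖Q₀ Q₁ x₁‖²`.

With `pᵢ = Qᵢ xᵢ`, the Bures angle between `pᵢ` and `xᵢ` is `arccos ‖pᵢ‖`, so the triangle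
inequality bounds the angle between `p₀` and `p₁` by
`arccos ‖p₀‖ + arccos F + arccos ‖p₁‖ ≤ 2 arccos √V + arccos F`, whose cosine `δ` is the bracket
in the bound. Hence `|⟪p₀, p₁⟫| ≥ δ ‖p₀‖ ‖p₁‖`; as `⟪p₀, p₁⟫ = ⟪Q₁ p₀, p₁⟫`, this gives
`‖Q₁ p₀‖ ≥ δ ‖p₀‖`, symmetrically `‖Q₀ p₁‖ ≥ δ ‖p₁‖`, and averaging the squares gives `E ≥ V δ²`.
-/

open Real in
theorem cos_two_mul_arccos_sqrt_add_arccos {V F : ℝ} (hV0 : 0 ≤ V) (hV1 : V ≤ 1)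
    (hF0 : -1 ≤ F) (hF1 : F ≤ 1) :
    cos (2 * arccos √V + arccos F) = (2 * V - 1) * F - 2 * √(V * (1 - V)) * √(1 - F ^ 2) := by
  have hsV : √V ≤ 1 := sqrt_le_one.mpr hV1
  rw [cos_add, cos_two_mul, sin_two_mul, cos_arccos (by linarith [sqrt_nonneg V]) hsV,
    cos_arccos hF0 hF1, sin_arccos, sin_arccos, sq_sqrt hV0, sqrt_mul hV0]
  ring

open Real in
theorem arccos_add_arccos_le_two_mul_arccos_sqrt {a b : ℝ} (ha0 : 0 ≤ a) (ha1 : a ≤ 1)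
    (hb0 : 0 ≤ b) (hb1 : b ≤ 1) (hab : 1 ≤ a ^ 2 + b ^ 2) :
    arccos a + arccos b ≤ 2 * arccos √((a ^ 2 + b ^ 2) / 2) := by
  have hsum : arccos a + arccos b ≤ π := by
    linarith [arccos_le_pi_div_two.mpr ha0, arccos_le_pi_div_two.mpr hb0]
  have hV : √((a ^ 2 + b ^ 2) / 2) ≤ 1 := sqrt_le_one.mpr (by nlinarith)
  have hrhs : 2 * arccos √((a ^ 2 + b ^ 2) / 2) ≤ π := by
    linarith [arccos_le_pi_div_two.mpr (sqrt_nonneg ((a ^ 2 + b ^ 2) / 2))]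
  -- `√((1 - a²)(1 - b²)) ≤ ab + 1 - a² - b²`, which squares to `0 ≤ (a - b)² (a² + b² - 1)`
  have hroot : √(1 - a ^ 2) * √(1 - b ^ 2) ≤ a * b + 1 - a ^ 2 - b ^ 2 := by
    rw [← sqrt_mul (by nlinarith)]
    refine sqrt_le_iff.mpr ⟨by nlinarith, ?_⟩
    nlinarith [sq_nonneg (a - b), mul_nonneg (sq_nonneg (a - b)) (sub_nonneg.mpr hab)]
  refine (strictAntiOn_cos.le_iff_ge ⟨mul_nonneg zero_le_two (arccos_nonneg _), hrhs⟩
    ⟨add_nonneg (arccos_nonneg a) (arccos_nonneg b), hsum⟩).mp ?_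
  rw [cos_two_mul, cos_arccos (by linarith [sqrt_nonneg ((a ^ 2 + b ^ 2) / 2)]) hV,
    sq_sqrt (by positivity), cos_add, cos_arccos (by linarith) ha1, cos_arccos (by linarith) hb1,
    sin_arccos, sin_arccos]
  linarith

section BuresAngle

variable {H : Type*} [NormedAddCommGroup H] [InnerProductSpace ℂ H]

open Real
open scoped InnerProductSpace

/-- The angle `arccos |⟪x, y⟫|` between the complex lines through `x` and `y`. Dividing by the
norms makes it scale invariant; it is `π / 2` when `x` or `y` vanishes. -/
noncomputable def buresAngle (x y : H) : ℝ :=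
  arccos (‖⟪x, y⟫_ℂ‖ / (‖x‖ * ‖y‖))

theorem buresAngle_comm (x y : H) : buresAngle x y = buresAngle y x := by
  rw [buresAngle, buresAngle, norm_inner_symm, mul_comm]

theorem buresAngle_nonneg (x y : H) : 0 ≤ buresAngle x y := arccos_nonneg _

theorem cos_buresAngle (x y : H) : cos (buresAngle x y) = ‖⟪x, y⟫_ℂ‖ / (‖x‖ * ‖y‖) :=
  cos_arccos (by linarith [div_nonneg (norm_nonneg ⟪x, y⟫_ℂ) (by positivity : 0 ≤ ‖x‖ * ‖y‖)])
    (div_le_one_of_le₀ (norm_inner_le_norm x y) (by positivity))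

theorem buresAngle_of_norm_eq_one {x y : H} (hx : ‖x‖ = 1) (hy : ‖y‖ = 1) :
    buresAngle x y = arccos ‖⟪x, y⟫_ℂ‖ := by
  rw [buresAngle, hx, hy, mul_one, div_one]

theorem buresAngle_smul_left {c : ℂ} (hc : ‖c‖ = 1) (x y : H) :
    buresAngle (c • x) y = buresAngle x y := by
  simp only [buresAngle, inner_smul_left, norm_mul, Complex.norm_conj, norm_smul, hc, one_mul]

theorem buresAngle_smul_right {c : ℂ} (hc : ‖c‖ = 1) (x y : H) :
    buresAngle x (c • y) = buresAngle x y := by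
  simp only [buresAngle, inner_smul_right, norm_mul, norm_smul, hc, one_mul]

/-- The Bures angle is the smallest real angle between `x` and a unimodular multiple of `y`, so
its triangle inequality follows from the one for real angles. -/
theorem buresAngle_le_add (x y z : H) :
    buresAngle x z ≤ buresAngle x y + buresAngle y z := by
  let _ := InnerProductSpace.complexToReal (G := H)
  have angle_eq (u v : H) :
      InnerProductGeometry.angle u v = arccos ((⟪u, v⟫_ℂ).re / (‖u‖ * ‖v‖)) := rfl
  have exists_phase (u v : H) :
      ∃ c : ℂ, ‖c‖ = 1 ∧ InnerProductGeometry.angle u (c • v) = buresAngle u v := by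
    set w := ⟪u, v⟫_ℂ
    set c := Complex.exp (↑(-Complex.arg w) * Complex.I)
    have hc : ‖c‖ = 1 := Complex.norm_exp_ofReal_mul_I _
    have hcw : c * w = ‖w‖ := by
      conv_lhs => rw [← Complex.norm_mul_exp_arg_mul_I w]
      rw [mul_left_comm, ← Complex.exp_add, Complex.ofReal_neg, neg_mul, neg_add_cancel,
        Complex.exp_zero, mul_one]
    refine ⟨c, hc, ?_⟩
    rw [angle_eq, inner_smul_right, hcw, Complex.ofReal_re, norm_smul, hc, one_mul, buresAngle]
  have le_angle (u v : H) : buresAngle u v ≤ InnerProductGeometry.angle u v :=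
    arccos_le_arccos (div_le_div_of_nonneg_right (Complex.re_le_norm _) (by positivity))
  obtain ⟨c, hc, hxy⟩ := exists_phase x y
  obtain ⟨c', hc', hyz⟩ := exists_phase (c • y) z
  calc buresAngle x z = buresAngle x (c' • z) := (buresAngle_smul_right hc' x z).symm
    _ ≤ InnerProductGeometry.angle x (c' • z) := le_angle _ _
    _ ≤ InnerProductGeometry.angle x (c • y) + InnerProductGeometry.angle (c • y) (c' • z) :=
      InnerProductGeometry.angle_le_angle_add_angle _ _ _
    _ = buresAngle x y + buresAngle y z := by rw [hxy, hyz, buresAngle_smul_left hc]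

end BuresAngle

namespace LinearMap.IsSymmetricProjection

variable {H : Type*} [NormedAddCommGroup H] [InnerProductSpace ℂ H] {Q : H →ₗ[ℂ] H}
open Real
open scoped InnerProductSpace

theorem inner_map_right (hQ : Q.IsSymmetricProjection) (u v : H) :
    ⟪u, Q v⟫_ℂ = ⟪Q u, Q v⟫_ℂ := by
  rw [hQ.isSymmetric, ← Module.End.mul_apply, hQ.isIdempotentElem.eq]

theorem norm_map_le (hQ : Q.IsSymmetricProjection) (x : H) : ‖Q x‖ ≤ ‖x‖ := by
  have h : ‖Q x‖ ^ 2 ≤ ‖x‖ * ‖Q x‖ := by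
    rw [← inner_self_eq_norm_sq (𝕜 := ℂ), ← hQ.inner_map_right]
    exact (RCLike.re_le_norm _).trans (norm_inner_le_norm _ _)
  nlinarith [norm_nonneg (Q x), norm_nonneg x]

theorem buresAngle_map_self (hQ : Q.IsSymmetricProjection) {x : H} (hx : ‖x‖ = 1) :
    buresAngle (Q x) x = arccos ‖Q x‖ := by
  rw [buresAngle, norm_inner_symm, hQ.inner_map_right, inner_self_eq_norm_sq_to_K, hx, mul_one,
    norm_pow, RCLike.norm_ofReal, abs_norm, sq, mul_self_div_self]

/-- The overlap of `u` with a vector in the range of `Q` only sees `Q u`. -/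
theorem mul_norm_le_norm_map_of_le_cos_buresAngle (hQ : Q.IsSymmetricProjection) {δ : ℝ} {u v : H}
    (h : δ ≤ cos (buresAngle u (Q v))) : δ * ‖u‖ ≤ ‖Q u‖ := by
  rcases le_or_gt δ 0 with hδ | hδ
  · exact (mul_nonpos_of_nonpos_of_nonneg hδ (norm_nonneg u)).trans (norm_nonneg _)
  rw [cos_buresAngle] at h
  have hpos : 0 < ‖u‖ * ‖Q v‖ := by
    by_contra! h0
    rw [le_antisymm h0 (by positivity), div_zero] at h
    linarith
  rw [le_div_iff₀ hpos, hQ.inner_map_right] at h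
  have h' : δ * ‖u‖ * ‖Q v‖ ≤ ‖Q u‖ * ‖Q v‖ := by
    linarith [norm_inner_le_norm (𝕜 := ℂ) (Q u) (Q v)]
  exact le_of_mul_le_mul_right h' (pos_of_mul_pos_right hpos (norm_nonneg u))

end LinearMap.IsSymmetricProjection

section ConsecutiveMeasurement

variable {H : Type*} [NormedAddCommGroup H] [InnerProductSpace ℂ H] {Q0 Q1 : H →ₗ[ℂ] H}
open Real
open scoped InnerProductSpace

theorem buresAngle_map_map_le (hQ0 : Q0.IsSymmetricProjection) (hQ1 : Q1.IsSymmetricProjection)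
    {x0 x1 : H} (hx0 : ‖x0‖ = 1) (hx1 : ‖x1‖ = 1) :
    buresAngle (Q0 x0) (Q1 x1) ≤ arccos ‖Q0 x0‖ + buresAngle x0 x1 + arccos ‖Q1 x1‖ :=
  calc buresAngle (Q0 x0) (Q1 x1)
      ≤ buresAngle (Q0 x0) x0 + (buresAngle x0 x1 + buresAngle x1 (Q1 x1)) :=
        (buresAngle_le_add _ x0 _).trans (add_le_add_right (buresAngle_le_add _ x1 _) _)
    _ = arccos ‖Q0 x0‖ + buresAngle x0 x1 + arccos ‖Q1 x1‖ := by
        rw [hQ0.buresAngle_map_self hx0, buresAngle_comm x1, hQ1.buresAngle_map_self hx1]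
        ring

theorem robust_CMT_of_projections (hQ0 : Q0.IsSymmetricProjection)
    (hQ1 : Q1.IsSymmetricProjection) {x0 x1 : H} (hx0 : ‖x0‖ = 1) (hx1 : ‖x1‖ = 1) {V F : ℝ}
    (hV : V = (‖Q0 x0‖ ^ 2 + ‖Q1 x1‖ ^ 2) / 2) (hF0 : 0 ≤ F) (hF : F ≤ ‖⟪x0, x1⟫_ℂ‖) :
    V * (max 0 ((2 * V - 1) * F - 2 * √(V * (1 - V)) * √(1 - F ^ 2))) ^ 2 ≤
      (‖Q1 (Q0 x0)‖ ^ 2 + ‖Q0 (Q1 x1)‖ ^ 2) / 2 := by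
  set δ := (2 * V - 1) * F - 2 * √(V * (1 - V)) * √(1 - F ^ 2)
  suffices h : max 0 δ * ‖Q0 x0‖ ≤ ‖Q1 (Q0 x0)‖ ∧ max 0 δ * ‖Q1 x1‖ ≤ ‖Q0 (Q1 x1)‖ by
    have hm : 0 ≤ max 0 δ := le_max_left _ _
    have h0 := pow_le_pow_left₀ (mul_nonneg hm (norm_nonneg _)) h.1 2
    have h1 := pow_le_pow_left₀ (mul_nonneg hm (norm_nonneg _)) h.2 2
    rw [hV]
    linarith [mul_pow (max 0 δ) ‖Q0 x0‖ 2, mul_pow (max 0 δ) ‖Q1 x1‖ 2]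
  rcases le_or_gt δ 0 with hδ0 | hδ0
  · simp only [max_eq_left hδ0, zero_mul, norm_nonneg, and_self]
  rw [max_eq_right hδ0.le]
  have ha0 : ‖Q0 x0‖ ≤ 1 := hx0 ▸ hQ0.norm_map_le x0
  have ha1 : ‖Q1 x1‖ ≤ 1 := hx1 ▸ hQ1.norm_map_le x1
  have hV0 : 0 ≤ V := by rw [hV]; positivity
  have hV1 : V ≤ 1 := by rw [hV]; nlinarith [norm_nonneg (Q0 x0), norm_nonneg (Q1 x1)]
  have hF1 : F ≤ 1 := hF.trans (by simpa [hx0, hx1] using norm_inner_le_norm (𝕜 := ℂ) x0 x1)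
  have hVF : 0 < (2 * V - 1) * F := by
    have : 0 ≤ 2 * √(V * (1 - V)) * √(1 - F ^ 2) := by positivity
    linarith
  have hV2 : 1 < 2 * V := by nlinarith
  set s := 2 * arccos √V + arccos F
  have hcos : cos s = δ := cos_two_mul_arccos_sqrt_add_arccos hV0 hV1 (by linarith) hF1
  have hangle : buresAngle (Q0 x0) (Q1 x1) ≤ s := by
    have h01 : buresAngle x0 x1 ≤ arccos F :=
      buresAngle_of_norm_eq_one hx0 hx1 ▸ arccos_le_arccos hF
    have hsum := arccos_add_arccos_le_two_mul_arccos_sqrt (norm_nonneg (Q0 x0)) ha0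
      (norm_nonneg (Q1 x1)) ha1 (by linarith)
    rw [← hV] at hsum
    linarith [buresAngle_map_map_le hQ0 hQ1 hx0 hx1]
  have hsπ : s ≤ π := by
    by_contra! h
    have : s ≤ π + π / 2 := by
      linarith [arccos_le_pi_div_two.mpr (sqrt_nonneg V), arccos_le_pi_div_two.mpr hF0]
    linarith [cos_nonpos_of_pi_div_two_le_of_le (by linarith) this]
  have hδcos : δ ≤ cos (buresAngle (Q0 x0) (Q1 x1)) :=
    hcos ▸ cos_le_cos_of_nonneg_of_le_pi (buresAngle_nonneg _ _) hsπ hangle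
  exact ⟨hQ1.mul_norm_le_norm_map_of_le_cos_buresAngle hδcos,
    hQ0.mul_norm_le_norm_map_of_le_cos_buresAngle (buresAngle_comm (Q0 x0) _ ▸ hδcos)⟩

end ConsecutiveMeasurement

namespace Matrix

variable {n : Type*} [Fintype n] [DecidableEq n]
open scoped InnerProductSpace

theorem trace_unitary_mul_mul_star {U : Matrix n n ℂ} (hU : U ∈ unitaryGroup n ℂ)
    (A : Matrix n n ℂ) : (U * A * star U).trace = A.trace := by
  rw [trace_mul_cycle, Unitary.star_mul_self_of_mem hU, one_mul]

theorem exists_mem_unitaryGroup_eq_mul_diagonal_sqrt {N : Matrix n n ℂ} {e : n → ℝ}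
    (hN : Nᴴ * N = diagonal fun j ↦ (e j : ℂ)) :
    ∃ U ∈ unitaryGroup n ℂ, N = U * diagonal fun j ↦ (√(e j) : ℂ) := by
  let c : n → EuclideanSpace ℂ n := fun j ↦ WithLp.toLp 2 (Nᵀ j)
  have hc (i j : n) : ⟪c i, c j⟫_ℂ = (Nᴴ * N) i j := by
    simp only [c, EuclideanSpace.inner_toLp_toLp, dotProduct, mul_apply, conjTranspose_apply,
      transpose_apply, Pi.star_apply, mul_comm]
  have hnorm (j : n) : √(e j) = ‖c j‖ := by
    rw [← Real.sqrt_sq (norm_nonneg (c j)), ← inner_self_eq_norm_sq (𝕜 := ℂ), hc, hN,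
      diagonal_apply_eq, RCLike.re_to_complex, Complex.ofReal_re]
  let v : n → EuclideanSpace ℂ n := fun j ↦ (‖c j‖⁻¹ : ℂ) • c j
  have hv : Orthonormal ℂ ({j | c j ≠ 0}.domRestrict v) := by
    rw [orthonormal_iff_ite]
    rintro ⟨i, hi⟩ ⟨j, hj⟩
    change ⟪v i, v j⟫_ℂ = _
    simp only [Subtype.mk.injEq, v, inner_smul_left, inner_smul_right, map_inv₀,
      Complex.conj_ofReal]
    split_ifs with hij
    · subst hij
      have : (‖c i‖ : ℂ) ≠ 0 := by simpa using hi
      rw [inner_self_eq_norm_sq_to_K]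
      field_simp
      rfl
    · rw [hc, hN, diagonal_apply_ne _ hij, mul_zero, mul_zero]
  obtain ⟨b, hb⟩ := hv.exists_orthonormalBasis_extension_of_card_eq
    (finrank_euclideanSpace (𝕜 := ℂ) (ι := n))
  refine ⟨(EuclideanSpace.basisFun n ℂ).toBasis.toMatrix b,
    (EuclideanSpace.basisFun n ℂ).toMatrix_orthonormalBasis_mem_unitary b, ?_⟩
  ext i j
  rw [mul_diagonal, Module.Basis.toMatrix_apply, OrthonormalBasis.coe_toBasis_repr_apply,
    EuclideanSpace.basisFun_repr, hnorm]
  change c j i = _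
  by_cases hj : c j = 0
  · rw [hj, norm_zero]
    simp
  · have : (‖c j‖ : ℂ) ≠ 0 := by simpa using hj
    rw [hb j hj]
    simp only [v, PiLp.smul_apply, smul_eq_mul]
    field_simp

theorem PosSemidef.posSemidef_sqrt {𝕜 : Type*} [RCLike 𝕜] {A : Matrix n n 𝕜}
    (hA : A.PosSemidef) : hA.sqrt.PosSemidef :=
  (posSemidef_diagonal_iff.mpr fun i ↦ by
    simp [Real.sqrt_nonneg]).mul_mul_conjTranspose_same _

theorem PosSemidef.sqrt_mul_self {𝕜 : Type*} [RCLike 𝕜] {A : Matrix n n 𝕜}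
    (hA : A.PosSemidef) : hA.sqrt * hA.sqrt = A := by
  set U : Matrix n n 𝕜 := hA.1.eigenvectorUnitary.1
  have hD : (diagonal ((↑) ∘ (√·) ∘ hA.1.eigenvalues) : Matrix n n 𝕜) *
      diagonal ((↑) ∘ (√·) ∘ hA.1.eigenvalues) = diagonal ((↑) ∘ hA.1.eigenvalues) := by
    rw [diagonal_mul_diagonal]
    congr 1
    ext i
    simp [← RCLike.ofReal_mul, Real.mul_self_sqrt (hA.eigenvalues_nonneg i)]
  conv_rhs => rw [hA.1.spectral_theorem, Unitary.conjStarAlgAut_apply, ← hD]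
  rw [PosSemidef.sqrt, show ∀ D : Matrix n n 𝕜, U * D * star U * (U * D * star U) =
      U * (D * (star U * U) * D) * star U by intro D; simp only [Matrix.mul_assoc],
    Unitary.coe_star_mul_self, Matrix.mul_one, Matrix.mul_assoc U]

theorem exists_mem_unitaryGroup_trace_mul_eq_trace_sqrt (M : Matrix n n ℂ) :
    ∃ W ∈ unitaryGroup n ℂ, (M * W).trace = (posSemidef_conjTranspose_mul_self M).sqrt.trace := by
  set hK := posSemidef_conjTranspose_mul_self M
  set V : Matrix n n ℂ := hK.1.eigenvectorUnitary.1
  have hV : V ∈ unitaryGroup n ℂ := hK.1.eigenvectorUnitary.2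
  have hMV : (M * V)ᴴ * (M * V) = diagonal fun j ↦ (hK.1.eigenvalues j : ℂ) := by
    have := hK.1.conjStarAlgAut_star_eigenvectorUnitary
    rw [Unitary.conjStarAlgAut_star_apply] at this
    rw [conjTranspose_mul, ← star_eq_conjTranspose V, ← Matrix.mul_assoc, Matrix.mul_assoc _ Mᴴ]
    exact this
  obtain ⟨U, hU, hMVU⟩ := exists_mem_unitaryGroup_eq_mul_diagonal_sqrt hMV
  refine ⟨V * star U, Submonoid.mul_mem _ hV (Unitary.star_mem hU), ?_⟩
  rw [← Matrix.mul_assoc, hMVU, trace_unitary_mul_mul_star hU, PosSemidef.sqrt,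
    trace_unitary_mul_mul_star hV]
  rfl

section HilbertSchmidt

noncomputable abbrev hilbertSchmidtNormedAddCommGroup : NormedAddCommGroup (Matrix n n ℂ) :=
  toMatrixNormedAddCommGroup 1 PosDef.one

attribute [local instance] hilbertSchmidtNormedAddCommGroup

noncomputable abbrev hilbertSchmidtInnerProductSpace : InnerProductSpace ℂ (Matrix n n ℂ) :=
  toMatrixInnerProductSpace 1 PosSemidef.one

attribute [local instance] hilbertSchmidtInnerProductSpace

theorem hilbertSchmidt_inner_eq (X Y : Matrix n n ℂ) : ⟪X, Y⟫_ℂ = (Y * Xᴴ).trace := by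
  change (Y * 1 * Xᴴ).trace = _
  rw [Matrix.mul_one]

theorem hilbertSchmidt_norm_sq (X : Matrix n n ℂ) : ‖X‖ ^ 2 = (X * Xᴴ).trace.re := by
  rw [← inner_self_eq_norm_sq (𝕜 := ℂ), hilbertSchmidt_inner_eq]
  rfl

theorem isSymmetricProjection_mulLeft {P : Matrix n n ℂ} (hP : P.IsHermitian)
    (hPP : P * P = P) : (LinearMap.mulLeft ℂ P).IsSymmetricProjection where
  isIdempotentElem := LinearMap.ext fun X ↦ by
    simp only [Module.End.mul_apply, LinearMap.mulLeft_apply, ← Matrix.mul_assoc, hPP]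
  isSymmetric X Y := by
    simp only [LinearMap.mulLeft_apply, hilbertSchmidt_inner_eq, conjTranspose_mul, hP.eq,
      ← Matrix.mul_assoc]
    rw [trace_mul_comm, Matrix.mul_assoc]

theorem hilbertSchmidt_norm_mul_sq {x σ : Matrix n n ℂ} (hx : x * xᴴ = σ) (B : Matrix n n ℂ) :
    ‖B * x‖ ^ 2 = (B * σ * Bᴴ).trace.re := by
  rw [hilbertSchmidt_norm_sq, conjTranspose_mul, ← hx]
  simp only [Matrix.mul_assoc]

theorem robust_CMT_of_purifications {P0 P1 σ0 σ1 x0 x1 : Matrix n n ℂ}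
    (hP0 : P0.IsHermitian) (hP0p : P0 * P0 = P0) (hP1 : P1.IsHermitian) (hP1p : P1 * P1 = P1)
    (hx0 : x0 * x0ᴴ = σ0) (h0tr : σ0.trace = 1) (hx1 : x1 * x1ᴴ = σ1) (h1tr : σ1.trace = 1)
    {V E F : ℝ} (hV : V = (1 / 2) * (((P0 * σ0).trace).re + ((P1 * σ1).trace).re))
    (hE : E = (1 / 2) * (((P1 * P0 * σ0 * P0 * P1).trace).re
      + ((P0 * P1 * σ1 * P1 * P0).trace).re))
    (hF0 : 0 ≤ F) (hF : F ≤ ‖(x1 * x0ᴴ).trace‖) :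
    E ≥ V * (max 0 ((2 * V - 1) * F - 2 * √(V * (1 - V)) * √(1 - F ^ 2))) ^ 2 := by
  have hunit {x σ : Matrix n n ℂ} (hx : x * xᴴ = σ) (htr : σ.trace = 1) : ‖x‖ = 1 := by
    rw [← pow_eq_one_iff_of_nonneg (norm_nonneg x) two_ne_zero, hilbertSchmidt_norm_sq, hx, htr,
      Complex.one_re]
  have hproj {x σ P : Matrix n n ℂ} (hx : x * xᴴ = σ) (hP : P.IsHermitian) (hPP : P * P = P) :
      ‖P * x‖ ^ 2 = (P * σ).trace.re := by
    rw [hilbertSchmidt_norm_mul_sq hx, hP.eq, trace_mul_cycle, hPP]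
  have hE' : E = (‖P1 * (P0 * x0)‖ ^ 2 + ‖P0 * (P1 * x1)‖ ^ 2) / 2 := by
    simp only [← Matrix.mul_assoc, hilbertSchmidt_norm_mul_sq hx0, hilbertSchmidt_norm_mul_sq hx1,
      conjTranspose_mul, hP0.eq, hP1.eq, hE]
    ring
  rw [hE', ge_iff_le]
  exact robust_CMT_of_projections (isSymmetricProjection_mulLeft hP0 hP0p)
    (isSymmetricProjection_mulLeft hP1 hP1p) (hunit hx0 h0tr) (hunit hx1 h1tr)
    (by rw [LinearMap.mulLeft_apply, LinearMap.mulLeft_apply, hproj hx0 hP0 hP0p,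
      hproj hx1 hP1 hP1p, hV]; ring) hF0 (by rwa [hilbertSchmidt_inner_eq])

end HilbertSchmidt

end Matrix

theorem traceNorm_nonneg {d : ℕ} (A : Matrix (Fin d) (Fin d) ℂ) : 0 ≤ traceNorm A :=
  (RCLike.nonneg_iff.mp (posSemidef_conjTranspose_mul_self A).posSemidef_sqrt.trace_nonneg).1

/-- Robust consecutive measurement theorem in fidelity. -/
theorem robust_CMT_fidelity {d : ℕ} (P0 P1 σ0 σ1 : Matrix (Fin d) (Fin d) ℂ)
    (hP0 : P0.IsHermitian) (hP0p : P0 * P0 = P0)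
    (hP1 : P1.IsHermitian) (hP1p : P1 * P1 = P1)
    (h0 : σ0.PosSemidef) (h0tr : σ0.trace = 1)
    (h1 : σ1.PosSemidef) (h1tr : σ1.trace = 1)
    (V E F : ℝ)
    (hV : V = (1 / 2) * (((P0 * σ0).trace).re + ((P1 * σ1).trace).re))
    (hE : E = (1 / 2) * (((P1 * P0 * σ0 * P0 * P1).trace).re
      + ((P0 * P1 * σ1 * P1 * P0).trace).re))
    (hF : F = traceNorm (h0.sqrt * h1.sqrt)) :
    E ≥ V * (max 0 ((2 * V - 1) * F
      - 2 * Real.sqrt (V * (1 - V)) * Real.sqrt (1 - F ^ 2))) ^ 2 := by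
  obtain ⟨W, hW, hWtr⟩ := exists_mem_unitaryGroup_trace_mul_eq_trace_sqrt (h0.sqrt * h1.sqrt)
  have hA := h0.posSemidef_sqrt.1.eq
  have hB := h1.posSemidef_sqrt.1.eq
  refine robust_CMT_of_purifications (x0 := h0.sqrt) (x1 := h1.sqrt * W) hP0 hP0p hP1 hP1p
    (by rw [hA, h0.sqrt_mul_self]) h0tr ?_ h1tr hV hE
    (hF ▸ traceNorm_nonneg _) ?_
  · rw [conjTranspose_mul, ← star_eq_conjTranspose W, Matrix.mul_assoc, ← Matrix.mul_assoc W,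
      Unitary.mul_star_self_of_mem hW, Matrix.one_mul, hB, h1.sqrt_mul_self]
  · rw [hF, hA, trace_mul_cycle, hWtr]
    exact Complex.re_le_norm _
end

section
/- Let $P_0, P_1$ be rank-one orthogonal projections and $\sigma_0, \sigma_1$ density operators on a 2-dimensional Hilbert space. Define $V = \frac{1}{2}(\mathrm{Tr}(P_0\sigma_0)+\mathrm{Tr}(P_1\sigma_1))$, $E = \frac{1}{2}(\mathrm{Tr}(P_0P_1P_0\sigma_0)+\mathrm{Tr}(P_1P_0P_1\sigma_1))$, and $\Delta = \frac{1}{2}\|\sigma_0 - \sigma_1\|_1$. Then $E \geq V\left(\max\{0, (2V-1)\sqrt{1-\Delta^2} - \sqrt{1-(2V-1)^2}\,\Delta\}\right)^2$. -/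
/-!
In Bloch coordinates a rank-one projection is a unit vector `r`, a density matrix is a vector `s`
of the unit ball, `Re Tr(P σ) = (1 + ⟪r, s⟫) / 2`, and `‖σ₀ - σ₁‖₁ = ‖s₀ - s₁‖`. A rank-one
projection satisfies `P Q P = Tr(P Q) • P` (Cayley–Hamilton with `det P = 0`), so `E = F V` with
`F = ‖(r₀ + r₁) / 2‖²`. Splitting `⟪r₀, s₀⟫ + ⟪r₁, s₁⟫` along `r₀ ± r₁` and `s₀ ± s₁` and applying
Cauchy–Schwarz gives `2V - 1 ≤ cos (α - β)` where `F = cos² α` and `Δ = sin β`; this is equivalent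
to `cos (arccos (2V - 1) + β) ≤ cos α`, which squares to the claimed bound.
-/

open Matrix BigOperators ComplexOrder

open scoped RealInnerProductSpace

section InnerProductSpace

variable {F : Type*} [NormedAddCommGroup F] [InnerProductSpace ℝ F]

theorem inner_add_inner_le (r₀ r₁ s₀ s₁ : F) :
    ⟪r₀, s₀⟫ + ⟪r₁, s₁⟫ ≤ (‖r₀ + r₁‖ * ‖s₀ + s₁‖ + ‖r₀ - r₁‖ * ‖s₀ - s₁‖) / 2 := by
  have h : ⟪r₀, s₀⟫ + ⟪r₁, s₁⟫ = (⟪r₀ + r₁, s₀ + s₁⟫ + ⟪r₀ - r₁, s₀ - s₁⟫) / 2 := by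
    simp only [inner_add_left, inner_add_right, inner_sub_left, inner_sub_right]
    ring
  rw [h]
  gcongr <;> exact real_inner_le_norm _ _

theorem inner_add_inner_le_of_norm_le_one {r₀ r₁ s₀ s₁ : F} (hs₀ : ‖s₀‖ ≤ 1) (hs₁ : ‖s₁‖ ≤ 1) :
    (⟪r₀, s₀⟫ + ⟪r₁, s₁⟫) / 2 ≤
      ‖r₀ + r₁‖ / 2 * √(1 - (‖s₀ - s₁‖ / 2) ^ 2) + ‖r₀ - r₁‖ / 2 * (‖s₀ - s₁‖ / 2) := by
  have hsum : ‖s₀ + s₁‖ / 2 ≤ √(1 - (‖s₀ - s₁‖ / 2) ^ 2) := by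
    apply Real.le_sqrt_of_sq_le
    have := parallelogram_law_with_norm ℝ s₀ s₁
    nlinarith [norm_nonneg s₀, norm_nonneg s₁]
  calc (⟪r₀, s₀⟫ + ⟪r₁, s₁⟫) / 2
      ≤ (‖r₀ + r₁‖ * ‖s₀ + s₁‖ + ‖r₀ - r₁‖ * ‖s₀ - s₁‖) / 4 := by
        linarith [inner_add_inner_le r₀ r₁ s₀ s₁]
    _ = ‖r₀ + r₁‖ / 2 * (‖s₀ + s₁‖ / 2) + ‖r₀ - r₁‖ / 2 * (‖s₀ - s₁‖ / 2) := by ring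
    _ ≤ _ := by gcongr

end InnerProductSpace

/-- With `a = cos α`, `a' = sin α`, `c = cos β`, `d = sin β` and `v = cos γ`, this says
`cos (γ + β) ≤ cos α` whenever `cos γ ≤ cos (α - β)`. -/
theorem max_zero_mul_sub_le {a a' c d v : ℝ} (ha : 0 ≤ a) (hc : 0 ≤ c) (hd : 0 ≤ d)
    (haa' : a ^ 2 + a' ^ 2 = 1) (hcd : c ^ 2 + d ^ 2 = 1) (hv : v ≤ a * c + a' * d) :
    max 0 (v * c - √(1 - v ^ 2) * d) ≤ a := by
  refine max_le ha ?_
  by_contra! hlt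
  set w := √(1 - v ^ 2)
  have hw : 0 ≤ w := Real.sqrt_nonneg _
  have hv₀ : 0 < v := by
    by_contra! hv₀
    nlinarith [mul_nonneg hw hd, mul_nonpos_of_nonpos_of_nonneg hv₀ hc]
  have hpyth : (a * c + a' * d) ^ 2 + (a' * c - a * d) ^ 2 = 1 := by
    linear_combination (c ^ 2 + d ^ 2) * haa' + hcd
  have hw2 : w ^ 2 = 1 - v ^ 2 := Real.sq_sqrt (by nlinarith [sq_nonneg (a' * c - a * d)])
  have hrot : a' * c - a * d ≤ w := by
    apply abs_le_of_sq_le_sq' _ hw |>.2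
    nlinarith
  nlinarith [mul_le_mul_of_nonneg_right hv hc, mul_le_mul_of_nonneg_right hrot hd]

theorem bloch_robust_CMT {F : Type*} [NormedAddCommGroup F] [InnerProductSpace ℝ F]
    {r₀ r₁ s₀ s₁ : F} (hr₀ : ‖r₀‖ = 1) (hr₁ : ‖r₁‖ = 1) (hs₀ : ‖s₀‖ ≤ 1) (hs₁ : ‖s₁‖ ≤ 1)
    {V Δ : ℝ} (hV : 2 * V - 1 = (⟪r₀, s₀⟫ + ⟪r₁, s₁⟫) / 2) (hΔ : Δ = ‖s₀ - s₁‖ / 2) :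
    V * (max 0 ((2 * V - 1) * √(1 - Δ ^ 2) - √(1 - (2 * V - 1) ^ 2) * Δ)) ^ 2 ≤
      (‖r₀ + r₁‖ / 2) ^ 2 * V := by
  have haa' : (‖r₀ + r₁‖ / 2) ^ 2 + (‖r₀ - r₁‖ / 2) ^ 2 = 1 := by
    have h := parallelogram_law_with_norm ℝ r₀ r₁
    rw [hr₀, hr₁] at h
    linear_combination h / 4
  have hΔ₀ : 0 ≤ Δ := hΔ ▸ by positivity
  have hΔ₁ : Δ ≤ 1 := hΔ ▸ by linarith [norm_sub_le s₀ s₁]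
  have hcΔ : √(1 - Δ ^ 2) ^ 2 + Δ ^ 2 = 1 := by
    rw [Real.sq_sqrt (by nlinarith)]
    ring
  have hv := inner_add_inner_le_of_norm_le_one (r₀ := r₀) (r₁ := r₁) hs₀ hs₁
  rw [← hV, ← hΔ] at hv
  have hV₀ : 0 ≤ V := by
    have h₀ : |⟪r₀, s₀⟫| ≤ 1 :=
      (abs_real_inner_le_norm r₀ s₀).trans (by rw [hr₀, one_mul]; exact hs₀)
    have h₁ : |⟪r₁, s₁⟫| ≤ 1 :=
      (abs_real_inner_le_norm r₁ s₁).trans (by rw [hr₁, one_mul]; exact hs₁)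
    linarith [(abs_le.mp h₀).1, (abs_le.mp h₁).1]
  have hmax := max_zero_mul_sub_le (by positivity) (Real.sqrt_nonneg _) hΔ₀ haa' hcΔ hv
  rw [mul_comm V]
  gcongr

namespace Matrix

theorem mul_mul_fin_two {R : Type*} [CommRing R] (A B : Matrix (Fin 2) (Fin 2) R) :
    A * B * A = (A * B).trace • A + A.det • (B - B.trace • 1) := by
  ext i j
  fin_cases i <;> fin_cases j <;>
    simp [mul_apply, Fin.sum_univ_two, trace_fin_two, det_fin_two] <;> ring

theorem mul_self_fin_two {R : Type*} [CommRing R] (A : Matrix (Fin 2) (Fin 2) R) :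
    A * A = A.trace • A - A.det • 1 := by
  ext i j
  fin_cases i <;> fin_cases j <;>
    simp [mul_apply, Fin.sum_univ_two, trace_fin_two, det_fin_two] <;> ring

theorem det_eq_zero_of_rank_lt {n K : Type*} [Fintype n] [DecidableEq n] [Field K]
    {A : Matrix n n K} (h : A.rank < Fintype.card n) : A.det = 0 := by
  by_contra hdet
  exact h.ne (rank_of_isUnit A ((isUnit_iff_isUnit_det A).mpr (isUnit_iff_ne_zero.mpr hdet)))

theorem trace_eq_one_of_isIdempotentElem_of_rank_eq_one {K : Type*} [Field K]
    {P : Matrix (Fin 2) (Fin 2) K} (hP : IsIdempotentElem P) (hr : P.rank = 1) : P.trace = 1 := by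
  have hP₀ : P ≠ 0 := by rintro rfl; simp at hr
  have h : (P.trace - 1) • P = 0 := by
    rw [sub_smul, one_smul, sub_eq_zero]
    simpa [det_eq_zero_of_rank_lt (hr ▸ by simp : P.rank < 2), hP.eq] using
      (mul_self_fin_two P).symm
  exact sub_eq_zero.mp ((smul_eq_zero.mp h).resolve_right hP₀)

theorem IsHermitian.trace_mul_eq_re {n : Type*} [Fintype n] {A B : Matrix n n ℂ}
    (hA : A.IsHermitian) (hB : B.IsHermitian) : (A * B).trace = ((A * B).trace.re : ℂ) := by
  have h := trace_conjTranspose (A * B)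
  rw [conjTranspose_mul, hA.eq, hB.eq, trace_mul_comm] at h
  exact (Complex.conj_eq_iff_re.mp h.symm).symm

theorem IsHermitian.eigenvalues_eq_of_eq_smul_one {n 𝕜 : Type*} [Fintype n] [DecidableEq n]
    [RCLike 𝕜] {A : Matrix n n 𝕜} (hA : A.IsHermitian) {c : ℝ} (h : A = (c : 𝕜) • 1) (i : n) :
    hA.eigenvalues i = c := by
  have hA_mulVec : ∀ v : n → 𝕜, A *ᵥ v = (c : 𝕜) • v := fun v ↦ by
    rw [h, smul_mulVec, one_mulVec]
  have hv := hA.mulVec_eigenvectorBasis i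
  rw [hA_mulVec, RCLike.real_smul_eq_coe_smul (K := 𝕜)] at hv
  have hne : ⇑(hA.eigenvectorBasis i) ≠ 0 := by
    simpa using hA.eigenvectorBasis.orthonormal.ne_zero i
  exact_mod_cast (smul_left_injective 𝕜 hne hv).symm

theorem PosSemidef.sqrt_eq_smul_one {n 𝕜 : Type*} [Fintype n] [DecidableEq n] [RCLike 𝕜]
    {A : Matrix n n 𝕜} (hA : A.PosSemidef) {c : ℝ} (h : A = (c : 𝕜) • 1) :
    hA.sqrt = ((√c : ℝ) : 𝕜) • 1 := by
  have hdiag : diagonal ((↑) ∘ (√·) ∘ hA.1.eigenvalues) = ((√c : ℝ) : 𝕜) • (1 : Matrix n n 𝕜) := by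
    ext i j
    simp [diagonal_apply, one_apply, hA.1.eigenvalues_eq_of_eq_smul_one h]
  rw [sqrt, hdiag, mul_smul_comm, mul_one, smul_mul_assoc,
    Unitary.mul_star_self_of_mem hA.1.eigenvectorUnitary.2]

end Matrix

/-- The coordinates are `Re Tr(A σₖ)` for the Pauli matrices `σₖ`, so that a Hermitian `A` equals
`(Tr A • 1 + ∑ₖ bₖ σₖ) / 2`. -/
def blochVector (A : Matrix (Fin 2) (Fin 2) ℂ) : EuclideanSpace ℝ (Fin 3) :=
  !₂[(A 0 1 + A 1 0).re, (A 1 0 - A 0 1).im, (A 0 0 - A 1 1).re]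

theorem blochVector_sub (A B : Matrix (Fin 2) (Fin 2) ℂ) :
    blochVector (A - B) = blochVector A - blochVector B := by
  ext i
  fin_cases i <;> simp [blochVector] <;> ring

namespace Matrix.IsHermitian

variable {A B : Matrix (Fin 2) (Fin 2) ℂ}

theorem fin_two_entries (hA : A.IsHermitian) :
    A 1 0 = starRingEnd ℂ (A 0 1) ∧ (A 0 0).im = 0 ∧ (A 1 1).im = 0 := by
  refine ⟨(hA.apply 1 0).symm, ?_, ?_⟩ <;>
    exact Complex.conj_eq_iff_im.mp (hA.apply _ _)

theorem re_trace_mul (hA : A.IsHermitian) (hB : B.IsHermitian) :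
    (A * B).trace.re = (A.trace.re * B.trace.re + ⟪blochVector A, blochVector B⟫) / 2 := by
  obtain ⟨a₁₀, a₀₀, a₁₁⟩ := hA.fin_two_entries
  obtain ⟨b₁₀, b₀₀, b₁₁⟩ := hB.fin_two_entries
  simp [trace_fin_two, mul_apply, Fin.sum_univ_two, blochVector, PiLp.inner_apply,
    Fin.sum_univ_three, a₁₀, b₁₀, a₀₀, a₁₁, b₀₀, b₁₁]
  ring

theorem det_eq (hA : A.IsHermitian) :
    A.det = (((A.trace.re ^ 2 - ‖blochVector A‖ ^ 2) / 4 : ℝ) : ℂ) := by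
  obtain ⟨a₁₀, a₀₀, a₁₁⟩ := hA.fin_two_entries
  rw [Complex.ext_iff, Complex.ofReal_re, Complex.ofReal_im]
  constructor <;>
  · simp [det_fin_two, trace_fin_two, blochVector, EuclideanSpace.real_norm_sq_eq,
      Fin.sum_univ_three, a₁₀, a₀₀, a₁₁]
    ring

end Matrix.IsHermitian

theorem traceNorm_eq_norm_blochVector {D : Matrix (Fin 2) (Fin 2) ℂ} (hD : D.IsHermitian)
    (htr : D.trace = 0) : traceNorm D = ‖blochVector D‖ := by
  have hsq : Dᴴ * D = (((‖blochVector D‖ / 2) ^ 2 : ℝ) : ℂ) • 1 := by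
    rw [hD.eq, mul_self_fin_two, hD.det_eq, htr, zero_smul, zero_sub, ← neg_smul]
    congr 1
    rw [Complex.zero_re]
    push_cast
    ring
  rw [traceNorm, PosSemidef.sqrt_eq_smul_one (c := (‖blochVector D‖ / 2) ^ 2) _ hsq,
    Real.sqrt_sq (by positivity)]
  simp

theorem norm_blochVector_eq_one {P : Matrix (Fin 2) (Fin 2) ℂ} (hP : P.IsHermitian)
    (hPP : IsIdempotentElem P) (hr : P.rank = 1) : ‖blochVector P‖ = 1 := by
  have h := hP.det_eq
  rw [det_eq_zero_of_rank_lt (hr ▸ by simp), trace_eq_one_of_isIdempotentElem_of_rank_eq_one hPP hr,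
    eq_comm, Complex.ofReal_eq_zero, Complex.one_re] at h
  exact (pow_eq_one_iff_of_nonneg (norm_nonneg _) two_ne_zero).mp (by linarith)

theorem norm_blochVector_le_one {σ : Matrix (Fin 2) (Fin 2) ℂ} (hσ : σ.PosSemidef)
    (htr : σ.trace = 1) : ‖blochVector σ‖ ≤ 1 := by
  have h := hσ.det_nonneg
  rw [hσ.1.det_eq, htr, Complex.zero_le_real, Complex.one_re] at h
  exact (pow_le_one_iff_of_nonneg (norm_nonneg _) two_ne_zero).mp (by linarith)

theorem re_trace_mul_mul_mul_of_rank_eq_one {P Q : Matrix (Fin 2) (Fin 2) ℂ} (hP : P.IsHermitian)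
    (hr : P.rank = 1) (hQ : Q.IsHermitian) (S : Matrix (Fin 2) (Fin 2) ℂ) :
    (P * Q * P * S).trace.re = (P * Q).trace.re * (P * S).trace.re := by
  rw [mul_mul_fin_two, det_eq_zero_of_rank_lt (hr ▸ by simp), zero_smul, add_zero,
    smul_mul_assoc, trace_smul, smul_eq_mul, hP.trace_mul_eq_re hQ, Complex.re_ofReal_mul,
    Complex.ofReal_re]

/-- Qubit robust consecutive measurement theorem with rank-one projections. -/
theorem qubit_robust_CMT (P0 P1 σ0 σ1 : Matrix (Fin 2) (Fin 2) ℂ)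
    (hP0 : P0.IsHermitian) (hP0p : P0 * P0 = P0) (hP0r : P0.rank = 1)
    (hP1 : P1.IsHermitian) (hP1p : P1 * P1 = P1) (hP1r : P1.rank = 1)
    (h0 : σ0.PosSemidef) (h0tr : σ0.trace = 1)
    (h1 : σ1.PosSemidef) (h1tr : σ1.trace = 1)
    (V E Δ : ℝ)
    (hV : V = (1 / 2) * (((P0 * σ0).trace).re + ((P1 * σ1).trace).re))
    (hE : E = (1 / 2) * (((P0 * P1 * P0 * σ0).trace).re + ((P1 * P0 * P1 * σ1).trace).re))
    (hΔ : Δ = (1 / 2) * traceNorm (σ0 - σ1)) :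
    E ≥ V * (max 0 ((2 * V - 1) * Real.sqrt (1 - Δ ^ 2)
        - Real.sqrt (1 - (2 * V - 1) ^ 2) * Δ)) ^ 2 := by
  have htr₀ := trace_eq_one_of_isIdempotentElem_of_rank_eq_one hP0p hP0r
  have htr₁ := trace_eq_one_of_isIdempotentElem_of_rank_eq_one hP1p hP1r
  have hV' :
      2 * V - 1 = (⟪blochVector P0, blochVector σ0⟫ + ⟪blochVector P1, blochVector σ1⟫) / 2 := by
    rw [hV, hP0.re_trace_mul h0.1, hP1.re_trace_mul h1.1, htr₀, htr₁, h0tr, h1tr, Complex.one_re]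
    ring
  have hE' : E = (‖blochVector P0 + blochVector P1‖ / 2) ^ 2 * V := by
    have hF : (P0 * P1).trace.re = (‖blochVector P0 + blochVector P1‖ / 2) ^ 2 := by
      rw [hP0.re_trace_mul hP1, htr₀, htr₁, Complex.one_re, div_pow, norm_add_sq_real,
        norm_blochVector_eq_one hP0 hP0p hP0r, norm_blochVector_eq_one hP1 hP1p hP1r]
      ring
    rw [hE, hV, re_trace_mul_mul_mul_of_rank_eq_one hP0 hP0r hP1,
      re_trace_mul_mul_mul_of_rank_eq_one hP1 hP1r hP0, trace_mul_comm P1 P0, hF]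
    ring
  have hΔ' : Δ = ‖blochVector σ0 - blochVector σ1‖ / 2 := by
    rw [hΔ, traceNorm_eq_norm_blochVector (h0.1.sub h1.1) (by rw [trace_sub, h0tr, h1tr, sub_self]),
      blochVector_sub]
    ring
  rw [hE']
  exact bloch_robust_CMT (norm_blochVector_eq_one hP0 hP0p hP0r)
    (norm_blochVector_eq_one hP1 hP1p hP1r) (norm_blochVector_le_one h0 h0tr)
    (norm_blochVector_le_one h1 h1tr) hV' hΔ'
end

section
/- For all $\Delta, V \in [0,1]$, the inequality $V\left(\max\{0, (2V-1)\sqrt{1-\Delta^2} - \sqrt{1-(2V-1)^2}\,\Delta\}\right)^2 \geq V(\max\{0, 2V-1\})^2 - \Delta$ holds. -/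
/-!
Write `2V - 1 = cos α` and `Δ = sin β` with `α = arccos (2V - 1)` and `β = arcsin Δ`. The
expression inside the maximum on the left is then `cos (α + β)`, and
`cos² α - cos² (α + β) = sin (2α + β) sin β ≤ sin β = Δ`. When `cos (α + β) < 0` the same
substitution, squared, gives `(2V - 1)² < Δ²`, so the right-hand side is already at most `0`.
-/

open Real

lemma cos_sq_sub_cos_add_sq (α β : ℝ) :
    cos α ^ 2 - cos (α + β) ^ 2 = sin (2 * α + β) * sin β := by
  rw [show 2 * α + β = α + (α + β) by ring, sin_add α (α + β), cos_add, sin_add]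
  linear_combination -cos α ^ 2 * sin_sq_add_cos_sq β

lemma cos_arccos_add_arcsin {c Δ : ℝ} (hc₁ : -1 ≤ c) (hc₂ : c ≤ 1) (hΔ₁ : -1 ≤ Δ)
    (hΔ₂ : Δ ≤ 1) :
    cos (arccos c + arcsin Δ) = c * √(1 - Δ ^ 2) - √(1 - c ^ 2) * Δ := by
  rw [cos_add, cos_arccos hc₁ hc₂, sin_arccos, cos_arcsin, sin_arcsin hΔ₁ hΔ₂]

lemma sq_sub_sq_cos_arccos_add_arcsin_le {c Δ : ℝ} (hc₁ : -1 ≤ c) (hc₂ : c ≤ 1) (hΔ₀ : 0 ≤ Δ)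
    (hΔ₁ : Δ ≤ 1) :
    c ^ 2 - (c * √(1 - Δ ^ 2) - √(1 - c ^ 2) * Δ) ^ 2 ≤ Δ := by
  have hΔ : -1 ≤ Δ := by linarith
  calc c ^ 2 - (c * √(1 - Δ ^ 2) - √(1 - c ^ 2) * Δ) ^ 2
      = cos (arccos c) ^ 2 - cos (arccos c + arcsin Δ) ^ 2 := by
        rw [cos_arccos hc₁ hc₂, cos_arccos_add_arcsin hc₁ hc₂ hΔ hΔ₁]
    _ = sin (2 * arccos c + arcsin Δ) * Δ := by
        rw [cos_sq_sub_cos_add_sq, sin_arcsin hΔ hΔ₁]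
    _ ≤ Δ := mul_le_of_le_one_left hΔ₀ (sin_le_one _)

lemma sq_lt_sq_of_mul_sqrt_lt {c Δ : ℝ} (hc₀ : 0 ≤ c) (hc₁ : c ≤ 1) (hΔ₀ : 0 ≤ Δ)
    (hΔ₁ : Δ ≤ 1) (h : c * √(1 - Δ ^ 2) < √(1 - c ^ 2) * Δ) :
    c ^ 2 < Δ ^ 2 := by
  have hsq : (c * √(1 - Δ ^ 2)) ^ 2 < (√(1 - c ^ 2) * Δ) ^ 2 :=
    pow_lt_pow_left₀ h (by positivity) two_ne_zero
  rw [mul_pow, mul_pow, sq_sqrt (by nlinarith), sq_sqrt (by nlinarith)] at hsq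
  nlinarith

lemma sq_max_zero_sub_sq_max_zero_cos_arccos_add_arcsin_le {c Δ : ℝ} (hc₁ : -1 ≤ c)
    (hc₂ : c ≤ 1) (hΔ₀ : 0 ≤ Δ) (hΔ₁ : Δ ≤ 1) :
    max 0 c ^ 2 - max 0 (c * √(1 - Δ ^ 2) - √(1 - c ^ 2) * Δ) ^ 2 ≤ Δ := by
  rcases le_or_gt c 0 with hc | hc
  · rw [max_eq_left hc]
    nlinarith [sq_nonneg (max 0 (c * √(1 - Δ ^ 2) - √(1 - c ^ 2) * Δ))]
  rw [max_eq_right hc.le]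
  rcases le_or_gt 0 (c * √(1 - Δ ^ 2) - √(1 - c ^ 2) * Δ) with hE | hE
  · rw [max_eq_right hE]
    exact sq_sub_sq_cos_arccos_add_arcsin_le hc₁ hc₂ hΔ₀ hΔ₁
  · rw [max_eq_left hE.le]
    have := sq_lt_sq_of_mul_sqrt_lt hc.le hc₂ hΔ₀ hΔ₁ (by linarith)
    nlinarith

/-- The angle-based lower bound dominates the additively-perturbed bound. -/
theorem angle_bound_dominates (Δ V : ℝ)
    (hΔ : Δ ∈ Set.Icc (0 : ℝ) 1) (hV : V ∈ Set.Icc (0 : ℝ) 1) :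
    V * (max 0 ((2 * V - 1) * Real.sqrt (1 - Δ ^ 2)
        - Real.sqrt (1 - (2 * V - 1) ^ 2) * Δ)) ^ 2
      ≥ V * (max 0 (2 * V - 1)) ^ 2 - Δ := by
  obtain ⟨hΔ₀, hΔ₁⟩ := hΔ
  obtain ⟨hV₀, hV₁⟩ := hV
  have key := sq_max_zero_sub_sq_max_zero_cos_arccos_add_arcsin_le
    (c := 2 * V - 1) (by linarith) (by linarith) hΔ₀ hΔ₁
  linear_combination mul_le_mul_of_nonneg_left key hV₀ + mul_le_of_le_one_left hΔ₀ hV₁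
end
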